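/- arXiv:2605.19423 — 3 statements merged into one kernel-verified Lean document; each statement's English description precedes it below -/
import Mathlib

section
/- Let (b,c) be a connected graph over (X,m), let v ∈ 𝓓₀ with v > 0 and set w = 𝓛v/v. Then the following are equivalent: (i) 𝓛v² ∈ ℓ¹(X,m); (ii) v ∈ ℓ²(X,|w|m); (iii) v ∈ ℓ²(X,w₋m). If these equivalent conditions hold, then 𝓠(v) = w(v) = ∑_x m(x)w(x)v(x)² and ∑_x m(x)·𝓛v²(x) = ∑_x c(x)·v(x)². -/
open Filter MeasureTheory Topology
open scoped ENNReal NNReal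

noncomputable section

namespace HG

variable {X : Type*}

open scoped Classical

/-- `f` has finite support (membership in `C_c(X)`). -/
def FinSupp (f : X → ℝ) : Prop := (Function.support f).Finite

/-- Membership in `𝓕`. -/
def MemF (b : X → X → ℝ) (f : X → ℝ) : Prop :=
  ∀ x : X, Summable fun y => b x y * |f y|

/-- The formal Laplacian `𝓛`. -/
def lap (b : X → X → ℝ) (c m : X → ℝ) (f : X → ℝ) (x : X) : ℝ :=
  (1 / m x) * ∑' y, b x y * (f x - f y) + (c x / m x) * f x

/-- The energy form `𝓠`, valued in `ℝ≥0∞`. -/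
def energy (b : X → X → ℝ) (c : X → ℝ) (f : X → ℝ) : ℝ≥0∞ :=
  (1 / 2) * ∑' x, ∑' y, ENNReal.ofReal (b x y * (f x - f y) ^ 2)
    + ∑' x, ENNReal.ofReal (c x * f x ^ 2)

/-- Membership in `𝓓`, the functions of finite energy. -/
def MemD (b : X → X → ℝ) (c : X → ℝ) (f : X → ℝ) : Prop := energy b c f < ⊤

/-- Membership in `𝓓₀`, the closure of `C_c(X)` w.r.t. `‖f‖_o = (𝓠(f)+f(o)²)^{1/2}`. -/
def MemD0 (b : X → X → ℝ) (c : X → ℝ) (o : X) (f : X → ℝ) : Prop :=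
  ∃ φ : ℕ → X → ℝ, (∀ n, FinSupp (φ n)) ∧
    Tendsto (fun n => energy b c (fun x => f x - φ n x)
      + ENNReal.ofReal ((f o - φ n o) ^ 2)) atTop (nhds 0)

/-- `(b,c)` is a connected graph over `(X,m)`. -/
structure IsGraph (b : X → X → ℝ) (c m : X → ℝ) : Prop where
  symm : ∀ x y, b x y = b y x
  nonneg : ∀ x y, 0 ≤ b x y
  loopless : ∀ x, b x x = 0
  deg_summable : ∀ x, Summable fun y => b x y
  c_nonneg : ∀ x, 0 ≤ c x
  m_pos : ∀ x, 0 < m x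
  connected : ∀ x y : X, ∃ (k : ℕ) (p : ℕ → X), p 0 = x ∧ p k = y ∧
    ∀ i < k, 0 < b (p i) (p (i + 1))

/-- `u` is superharmonic: `u ∈ 𝓕` and `𝓛u ≥ 0`. -/
def Superharmonic (b : X → X → ℝ) (c m : X → ℝ) (u : X → ℝ) : Prop :=
  MemF b u ∧ ∀ x, 0 ≤ lap b c m u x

/-- `u` is subharmonic: `u ∈ 𝓕` and `𝓛u ≤ 0`. -/
def Subharmonic (b : X → X → ℝ) (c m : X → ℝ) (u : X → ℝ) : Prop :=
  MemF b u ∧ ∀ x, lap b c m u x ≤ 0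

/-- The Green operator `Gk(x) = ∑_y G(x,y) k(y)`. -/
def Gop (G : X → X → ℝ) (k : X → ℝ) (x : X) : ℝ := ∑' y, G x y * k y

/-- Membership in `𝓖`, the domain of the Green operator. -/
def MemG (G : X → X → ℝ) (k : X → ℝ) : Prop :=
  ∀ x, Summable fun y => G x y * |k y|

/-- `u` is a potential: `u ∈ 𝓕`, `𝓛u ∈ 𝓖` and `u = G𝓛u`. -/
def IsPotential (b : X → X → ℝ) (c m : X → ℝ) (G : X → X → ℝ) (u : X → ℝ) : Prop :=
  MemF b u ∧ MemG G (lap b c m u) ∧ u = Gop G (lap b c m u)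

/-- Membership in `𝓖₂ = {k ∈ 𝓖 : ∑_x m(x)|k(x)| (G|k|)(x) < ∞}`. -/
def MemG2 (m : X → ℝ) (G : X → X → ℝ) (k : X → ℝ) : Prop :=
  MemG G k ∧ Summable fun x => m x * |k x| * Gop G (fun y => |k y|) x

/-- `G` is the Green function of the (transient) graph `(b,c)` over `(X,m)`:
for every `y`, `G(·,y)` is the unique function in `𝓓₀ ∩ 𝓕` with `𝓛 G(·,y) = 1_y`;
it is strictly positive and symmetric. -/
structure IsGreen (b : X → X → ℝ) (c m : X → ℝ) (o : X) (G : X → X → ℝ) : Prop where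
  pos : ∀ x y, 0 < G x y
  symm : ∀ x y, G x y = G y x
  memF : ∀ y, MemF b fun x => G x y
  memD0 : ∀ y, MemD0 b c o fun x => G x y
  lap_eq : ∀ y x, lap b c m (fun z => G z y) x = if x = y then 1 else 0
  unique : ∀ (y : X) (u : X → ℝ), MemF b u → MemD0 b c o u →
    (∀ x, lap b c m u x = if x = y then 1 else 0) → u = fun x => G x y

/-- `w(φ) = ∑_x m(x) w(x) φ(x)²`. -/
def wsum (m w φ : X → ℝ) : ℝ := ∑' x, m x * w x * φ x ^ 2

/-- `w` is a Hardy type weight: `𝓠(φ) ≥ ∑_x m(x) w(x) φ(x)²` for all `φ ∈ C_c(X)`. -/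
def IsHardyType (b : X → X → ℝ) (c m w : X → ℝ) : Prop :=
  ∀ φ : X → ℝ, FinSupp φ → ENNReal.ofReal (wsum m w φ) ≤ energy b c φ

/-- `w` is a Hardy weight: a non-negative Hardy type weight. -/
def IsHardy (b : X → X → ℝ) (c m w : X → ℝ) : Prop :=
  (∀ x, 0 ≤ w x) ∧ IsHardyType b c m w

/-- A Hardy weight is critical if the only Hardy weight above it is itself. -/
def IsCriticalHardy (b : X → X → ℝ) (c m w : X → ℝ) : Prop :=
  IsHardy b c m w ∧ ∀ w', IsHardy b c m w' → (∀ x, w x ≤ w' x) → w' = w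

/-- A Hardy type weight is critical if the only Hardy type weight above it is itself. -/
def IsCriticalHardyType (b : X → X → ℝ) (c m w : X → ℝ) : Prop :=
  IsHardyType b c m w ∧ ∀ w', IsHardyType b c m w' → (∀ x, w x ≤ w' x) → w' = w

/-- A ground state of `w`: a strictly positive `v ∈ 𝓕` with `𝓛v = wv`. -/
def IsGroundState (b : X → X → ℝ) (c m w v : X → ℝ) : Prop :=
  MemF b v ∧ (∀ x, 0 < v x) ∧ ∀ x, lap b c m v x = w x * v x

/-- A ground state of `w` obtained as pointwise limit of a null sequence. -/
def IsGroundStateSeq (b : X → X → ℝ) (c m w v : X → ℝ) : Prop :=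
  IsGroundState b c m w v ∧
  ∃ e : ℕ → X → ℝ, (∀ n, FinSupp (e n)) ∧
    Tendsto (fun n => (energy b c (e n)).toReal - wsum m w (e n)) atTop (nhds 0) ∧
    ∀ x, Tendsto (fun n => e n x) atTop (nhds (v x))

/-- Membership in `C₀(X)`, functions vanishing at infinity. -/
def MemC0 (f : X → ℝ) : Prop := ∀ ε : ℝ, 0 < ε → {x | ε ≤ |f x|}.Finite

/-! Put `g = m 𝓛v`, so that `m w v² = g v` and `m 𝓛(v²) = 2 g v - d` pointwise, where
`d(x) = ∑_y b(x,y) (v(x) - v(y))² + c(x) v(x)² ≥ 0` has `∑ d = 2 𝓠(v) - ∑ c v²`. The three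
conditions are then summability of `|2 g v - d|`, `|g v|` and `(g v)₋`, and everything follows from
one fact: if `(g v)₋` is summable, then `g v` is summable with sum `𝓠(v)`.

For this, approximate `v` in `𝓓₀` by finitely supported `ψₙ` with `0 ≤ ψₙ ≤ v`, and apply Green's
formula `∑ g ψₙ = ½ ∑ b ∇v ∇ψₙ + ∑ c v ψₙ`. The right side tends to `𝓠(v)`, since `∇(v - ψₙ)`
is bounded in `ℓ²(b)` and tends to `0` pointwise, hence weakly. On the left, dominated convergence
handles `g₋ v`; then `∑ g₊ ψₙ` converges, which bounds the partial sums of `g₊ v`, and dominated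
convergence applies to `g₊ v` too. -/

section Energy

variable {b : X → X → ℝ} {c : X → ℝ}

lemma summable_of_tsum_ofReal_ne_top {ι : Type*} {f : ι → ℝ} (hf : ∀ i, 0 ≤ f i)
    (h : ∑' i, ENNReal.ofReal (f i) ≠ ⊤) : Summable f := by
  simpa only [ENNReal.toReal_ofReal (hf _)] using ENNReal.summable_toReal h

lemma ofReal_mul_le_of_le {β s t u : ℝ} {A B : ℝ≥0} (hβ : 0 ≤ β)
    (h : s ≤ A * t + B * u) :
    ENNReal.ofReal (β * s) ≤ A * ENNReal.ofReal (β * t) + B * ENNReal.ofReal (β * u) := by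
  calc ENNReal.ofReal (β * s) ≤ ENNReal.ofReal (A * (β * t) + B * (β * u)) :=
        ENNReal.ofReal_le_ofReal (by nlinarith)
    _ ≤ ENNReal.ofReal (A * (β * t)) + ENNReal.ofReal (B * (β * u)) := ENNReal.ofReal_add_le
    _ = A * ENNReal.ofReal (β * t) + B * ENNReal.ofReal (β * u) := by
        rw [ENNReal.ofReal_mul A.coe_nonneg, ENNReal.ofReal_mul B.coe_nonneg,
          ENNReal.ofReal_coe_nnreal, ENNReal.ofReal_coe_nnreal]

lemma energy_eq_tsum_prod (f : X → ℝ) :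
    energy b c f = 1 / 2 * ∑' p : X × X, ENNReal.ofReal (b p.1 p.2 * (f p.1 - f p.2) ^ 2)
      + ∑' x, ENNReal.ofReal (c x * f x ^ 2) := by
  rw [energy, ENNReal.tsum_prod']

theorem energy_toReal_eq (hb : ∀ x y, 0 ≤ b x y) (hc : ∀ x, 0 ≤ c x) {f : X → ℝ}
    (hf : energy b c f ≠ ⊤) :
    Summable (fun p : X × X => b p.1 p.2 * (f p.1 - f p.2) ^ 2) ∧
    Summable (fun x => c x * f x ^ 2) ∧
    (energy b c f).toReal =
      1 / 2 * ∑' p : X × X, b p.1 p.2 * (f p.1 - f p.2) ^ 2 + ∑' x, c x * f x ^ 2 := by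
  have hpair_nonneg : ∀ p : X × X, 0 ≤ b p.1 p.2 * (f p.1 - f p.2) ^ 2 :=
    fun p => mul_nonneg (hb _ _) (sq_nonneg _)
  have hc_nonneg : ∀ x, 0 ≤ c x * f x ^ 2 := fun x => mul_nonneg (hc x) (sq_nonneg _)
  rw [energy_eq_tsum_prod] at hf ⊢
  obtain ⟨hP, hC⟩ := ENNReal.add_ne_top.mp hf
  have hP' : ∑' p : X × X, ENNReal.ofReal (b p.1 p.2 * (f p.1 - f p.2) ^ 2) ≠ ⊤ :=
    fun h => hP (by simp [h])
  have hPs := summable_of_tsum_ofReal_ne_top hpair_nonneg hP'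
  have hCs := summable_of_tsum_ofReal_ne_top hc_nonneg hC
  refine ⟨hPs, hCs, ?_⟩
  rw [ENNReal.toReal_add hP hC, ENNReal.toReal_mul,
    ENNReal.tsum_toReal_eq fun _ => ENNReal.ofReal_ne_top,
    ENNReal.tsum_toReal_eq fun _ => ENNReal.ofReal_ne_top]
  simp only [ENNReal.toReal_ofReal (hpair_nonneg _), ENNReal.toReal_ofReal (hc_nonneg _)]
  norm_num

theorem energy_le_of_sq_le (hb : ∀ x y, 0 ≤ b x y) (hc : ∀ x, 0 ≤ c x) {f g h : X → ℝ}
    {A B : ℝ≥0} (hdiff : ∀ x y, (f x - f y) ^ 2 ≤ A * (g x - g y) ^ 2 + B * (h x - h y) ^ 2)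
    (hval : ∀ x, f x ^ 2 ≤ A * g x ^ 2 + B * h x ^ 2) :
    energy b c f ≤ A * energy b c g + B * energy b c h := by
  calc energy b c f
      ≤ 1 / 2 * ∑' x, ∑' y, (A * ENNReal.ofReal (b x y * (g x - g y) ^ 2)
            + B * ENNReal.ofReal (b x y * (h x - h y) ^ 2))
        + ∑' x, (A * ENNReal.ofReal (c x * g x ^ 2) + B * ENNReal.ofReal (c x * h x ^ 2)) := by
        unfold energy
        gcongr with x y x
        · exact ofReal_mul_le_of_le (hb x y) (hdiff x y)
        · exact ofReal_mul_le_of_le (hc x) (hval x)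
    _ = A * energy b c g + B * energy b c h := by
        simp only [energy, ENNReal.tsum_add, ENNReal.tsum_mul_left]
        ring

theorem energy_ne_top_of_finSupp (hsymm : ∀ x y, b x y = b y x) (hb : ∀ x y, 0 ≤ b x y)
    (hdeg : ∀ x, Summable fun y => b x y) {φ : X → ℝ} (hφ : FinSupp φ) :
    energy b c φ ≠ ⊤ := by
  have hzero : ∀ x ∉ hφ.toFinset, φ x = 0 :=
    fun x hx => Function.notMem_support.mp fun h => hx (hφ.mem_toFinset.mpr h)
  have hdeg_sum : ∑' x, ∑' y, ENNReal.ofReal (b x y * φ x ^ 2) ≠ ⊤ := by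
    rw [tsum_eq_sum (s := hφ.toFinset) fun x hx => by simp [hzero x hx]]
    exact ENNReal.sum_ne_top.mpr fun x _ => ((hdeg x).mul_right _).tsum_ofReal_ne_top
  have hpair : ∑' x, ∑' y, ENNReal.ofReal (b x y * (φ x - φ y) ^ 2)
      ≤ 2 * ∑' x, ∑' y, ENNReal.ofReal (b x y * φ x ^ 2)
        + 2 * ∑' x, ∑' y, ENNReal.ofReal (b x y * φ x ^ 2) := by
    calc ∑' x, ∑' y, ENNReal.ofReal (b x y * (φ x - φ y) ^ 2)
        ≤ ∑' x, ∑' y, ((2 : ℝ≥0) * ENNReal.ofReal (b x y * φ x ^ 2)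
            + (2 : ℝ≥0) * ENNReal.ofReal (b x y * φ y ^ 2)) := by
          gcongr with x y
          exact ofReal_mul_le_of_le (hb x y) (by push_cast; nlinarith [sq_nonneg (φ x + φ y)])
      _ = _ := by
          simp only [ENNReal.tsum_add, ENNReal.tsum_mul_left]
          rw [ENNReal.tsum_comm (f := fun x y => ENNReal.ofReal (b x y * φ y ^ 2))]
          simp only [hsymm _ _]
          norm_num
  have hc_sum : ∑' x, ENNReal.ofReal (c x * φ x ^ 2) ≠ ⊤ := by
    rw [tsum_eq_sum (s := hφ.toFinset) fun x hx => by simp [hzero x hx]]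
    exact ENNReal.sum_ne_top.mpr fun x _ => ENNReal.ofReal_ne_top
  refine ENNReal.add_ne_top.mpr ⟨ENNReal.mul_ne_top (by norm_num) ?_, hc_sum⟩
  exact ne_top_of_le_ne_top (by finiteness) hpair

lemma ofReal_mul_sq_sub_le_two_mul_energy (f : X → ℝ) (x y : X) :
    ENNReal.ofReal (b x y * (f x - f y) ^ 2) ≤ 2 * energy b c f := by
  calc ENNReal.ofReal (b x y * (f x - f y) ^ 2)
      ≤ ∑' p : X × X, ENNReal.ofReal (b p.1 p.2 * (f p.1 - f p.2) ^ 2) :=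
        ENNReal.le_tsum (x, y)
    _ = 2 * (1 / 2 * ∑' p : X × X, ENNReal.ofReal (b p.1 p.2 * (f p.1 - f p.2) ^ 2)) := by
        rw [← mul_assoc, one_div, ENNReal.mul_inv_cancel (by norm_num) (by norm_num), one_mul]
    _ ≤ 2 * energy b c f := by
        rw [energy_eq_tsum_prod]
        gcongr
        exact le_self_add

end Energy

section Approximation

variable {b : X → X → ℝ} {c m : X → ℝ}

lemma tendsto_zero_of_tendsto_ofReal_mul_sq {u : ℕ → ℝ} {β : ℝ} (hβ : 0 < β)
    (h : Tendsto (fun n => ENNReal.ofReal (β * u n ^ 2)) atTop (𝓝 0)) :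
    Tendsto u atTop (𝓝 0) := by
  have hβu : Tendsto (fun n => β * u n ^ 2) atTop (𝓝 0) := by
    simpa [ENNReal.toReal_ofReal (mul_nonneg hβ.le (sq_nonneg _)), Function.comp_def] using
      (ENNReal.tendsto_toReal ENNReal.zero_ne_top).comp h
  have hsq : Tendsto (fun n => √(u n ^ 2)) atTop (𝓝 0) := by
    simpa [hβ.ne'] using (hβu.div_const β).sqrt
  rw [tendsto_zero_iff_abs_tendsto_zero]
  simpa only [Real.sqrt_sq_eq_abs, Function.comp_def] using hsq

theorem tendsto_apply_of_energy_tendsto_zero (hg : IsGraph b c m) {o : X} {f : ℕ → X → ℝ}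
    (hE : Tendsto (fun n => energy b c (f n)) atTop (𝓝 0))
    (ho : Tendsto (fun n => f n o) atTop (𝓝 0)) (x : X) :
    Tendsto (fun n => f n x) atTop (𝓝 0) := by
  obtain ⟨k, p, rfl, rfl, hpos⟩ := hg.connected o x
  have h2E : Tendsto (fun n => 2 * energy b c (f n)) atTop (𝓝 0) := by
    simpa using ENNReal.Tendsto.const_mul hE (Or.inr ENNReal.ofNat_ne_top)
  suffices ∀ i ≤ k, Tendsto (fun n => f n (p i)) atTop (𝓝 0) from this k le_rfl
  intro i
  induction i with
  | zero => exact fun _ => ho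
  | succ i ih =>
    intro hi
    have hstep : Tendsto (fun n => f n (p i) - f n (p (i + 1))) atTop (𝓝 0) :=
      tendsto_zero_of_tendsto_ofReal_mul_sq (hpos i hi) <|
        tendsto_of_tendsto_of_tendsto_of_le_of_le tendsto_const_nhds h2E (fun _ => zero_le)
          fun n => ofReal_mul_sq_sub_le_two_mul_energy (f n) _ _
    simpa using (ih (by omega)).sub hstep

theorem MemD0.exists_approx (hg : IsGraph b c m) {o : X} {v : X → ℝ} (hv : MemD0 b c o v) :
    ∃ φ : ℕ → X → ℝ, (∀ n, FinSupp (φ n)) ∧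
      Tendsto (fun n => energy b c fun x => v x - φ n x) atTop (𝓝 0) ∧
      ∀ x, Tendsto (fun n => φ n x) atTop (𝓝 (v x)) := by
  obtain ⟨φ, hφ, hlim⟩ := hv
  have hE : Tendsto (fun n => energy b c fun x => v x - φ n x) atTop (𝓝 0) :=
    tendsto_of_tendsto_of_tendsto_of_le_of_le tendsto_const_nhds hlim (fun _ => zero_le)
      fun _ => le_self_add
  have ho : Tendsto (fun n => v o - φ n o) atTop (𝓝 0) :=
    tendsto_zero_of_tendsto_ofReal_mul_sq one_pos <| by
      simpa using tendsto_of_tendsto_of_tendsto_of_le_of_le tendsto_const_nhds hlim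
        (fun _ => zero_le) fun _ => le_add_self
  refine ⟨φ, hφ, hE, fun x => ?_⟩
  simpa using (tendsto_const_nhds (x := v x)).sub
    (tendsto_apply_of_energy_tendsto_zero hg hE ho x)

theorem MemD0.energy_ne_top (hg : IsGraph b c m) {o : X} {v : X → ℝ} (hv : MemD0 b c o v) :
    energy b c v ≠ ⊤ := by
  obtain ⟨φ, hφ, hE, -⟩ := hv.exists_approx hg
  obtain ⟨n, hn⟩ := (hE.eventually_lt_const zero_lt_one).exists
  have hle : energy b c v ≤ (2 : ℝ≥0) * energy b c (fun x => v x - φ n x)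
      + (2 : ℝ≥0) * energy b c (φ n) :=
    energy_le_of_sq_le hg.nonneg hg.c_nonneg
      (fun x y => by
        push_cast
        nlinarith [add_sq_le (a := v x - φ n x - (v y - φ n y)) (b := φ n x - φ n y)])
      (fun x => by push_cast; nlinarith [add_sq_le (a := v x - φ n x) (b := φ n x)])
  refine ne_top_of_le_ne_top ?_ hle
  have := energy_ne_top_of_finSupp (c := c) hg.symm hg.nonneg hg.deg_summable (hφ n)
  have := hn.ne_top
  finiteness

lemma sq_clamp_sub_clamp_le (a a' t t' : ℝ) :
    (min (max a 0) t - min (max a' 0) t') ^ 2 ≤ (a - a') ^ 2 + (t - t') ^ 2 := by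
  have h := (abs_min_sub_min_le_max _ t _ t').trans
    (max_le_max (abs_max_sub_max_le_abs a a' 0) le_rfl)
  have h2 := pow_le_pow_left₀ (abs_nonneg _) h 2
  rw [sq_abs] at h2
  rcases max_cases |a - a'| |t - t'| with ⟨hmax, -⟩ | ⟨hmax, -⟩ <;>
    rw [hmax, sq_abs] at h2 <;> nlinarith [sq_nonneg (a - a'), sq_nonneg (t - t')]

/-- Clamping into `[0, v]` is 1-Lipschitz, so it keeps the energy distance to `v` bounded;
the bounds `0 ≤ ψ n ≤ v` are what dominated convergence needs. -/
theorem MemD0.exists_approx_between (hg : IsGraph b c m) {o : X} {v : X → ℝ}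
    (hv : MemD0 b c o v) (hv_nonneg : ∀ x, 0 ≤ v x) :
    ∃ ψ : ℕ → X → ℝ, (∀ n, FinSupp (ψ n)) ∧ (∀ n x, 0 ≤ ψ n x) ∧
      (∀ n x, ψ n x ≤ v x) ∧ (∀ x, Tendsto (fun n => ψ n x) atTop (𝓝 (v x))) ∧
      ∀ᶠ n in atTop, energy b c (fun x => v x - ψ n x) ≤ 8 * energy b c v + 4 := by
  obtain ⟨φ, hφ, hE, hpt⟩ := hv.exists_approx hg
  set ψ : ℕ → X → ℝ := fun n x => min (max (φ n x) 0) (v x) with hψ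
  have hψ_nonneg : ∀ n x, 0 ≤ ψ n x := fun n x => le_min (le_max_right _ _) (hv_nonneg x)
  have hψ_le : ∀ n x, ψ n x ≤ v x := fun n x => min_le_right _ _
  refine ⟨ψ, fun n => ?_, hψ_nonneg, hψ_le, fun x => ?_, ?_⟩
  · refine (hφ n).subset fun x hx => ?_
    contrapose! hx
    simp [hψ, Function.notMem_support.mp hx, hv_nonneg x]
  · simpa [hψ, hv_nonneg x] using
      ((hpt x).max tendsto_const_nhds).min (tendsto_const_nhds (x := v x))
  filter_upwards [hE.eventually_le_const zero_lt_one] with n hn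
  calc energy b c (fun x => v x - ψ n x)
      ≤ (8 : ℝ≥0) * energy b c v + (4 : ℝ≥0) * energy b c fun x => v x - φ n x := by
        refine energy_le_of_sq_le hg.nonneg hg.c_nonneg (fun x y => ?_) (fun x => ?_)
        · have := sq_clamp_sub_clamp_le (φ n x) (φ n y) (v x) (v y)
          push_cast
          nlinarith [sq_nonneg (v x - v y + (ψ n x - ψ n y)),
            sq_nonneg (v x - v y + (v x - φ n x - (v y - φ n y)))]
        · have := hψ_nonneg n x
          have := hψ_le n x
          push_cast
          nlinarith [sq_nonneg (v x - φ n x)]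
    _ ≤ 8 * energy b c v + 4 * 1 := by
        push_cast
        gcongr
    _ = 8 * energy b c v + 4 := by rw [mul_one]

end Approximation

section Series

variable {ι : Type*}

lemma abs_mul_mul_le_of_pos {β a u t : ℝ} (hβ : 0 ≤ β) (ht : 0 < t) :
    |β * a * u| ≤ (t * (β * a ^ 2) + t⁻¹ * (β * u ^ 2)) / 2 := by
  have key : 2 * t * |β * a * u| ≤ t ^ 2 * (β * a ^ 2) + β * u ^ 2 := by
    rcases abs_cases (β * a * u) with ⟨h, -⟩ | ⟨h, -⟩ <;> rw [h] <;>
      nlinarith [mul_nonneg hβ (sq_nonneg (t * a - u)), mul_nonneg hβ (sq_nonneg (t * a + u))]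
  rw [le_div_iff₀ two_pos]
  calc |β * a * u| * 2 = t⁻¹ * (2 * t * |β * a * u|) := by field_simp
    _ ≤ t⁻¹ * (t ^ 2 * (β * a ^ 2) + β * u ^ 2) := by gcongr
    _ = t * (β * a ^ 2) + t⁻¹ * (β * u ^ 2) := by field_simp

variable {β a u : ι → ℝ}

lemma summable_mul_mul_of_summable_sq (hβ : ∀ i, 0 ≤ β i)
    (ha : Summable fun i => β i * a i ^ 2) (hu : Summable fun i => β i * u i ^ 2) :
    Summable fun i => β i * a i * u i :=
  .of_norm_bounded (((ha.mul_left 1).add (hu.mul_left 1⁻¹)).div_const 2)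
    fun i => abs_mul_mul_le_of_pos (hβ i) one_pos

lemma abs_tsum_mul_mul_le (hβ : ∀ i, 0 ≤ β i) (ha : Summable fun i => β i * a i ^ 2)
    (hu : Summable fun i => β i * u i ^ 2) {t : ℝ} (ht : 0 < t) :
    |∑' i, β i * a i * u i|
      ≤ (t * ∑' i, β i * a i ^ 2 + t⁻¹ * ∑' i, β i * u i ^ 2) / 2 := by
  have hbound := ((ha.mul_left t).add (hu.mul_left t⁻¹)).div_const 2
  calc |∑' i, β i * a i * u i| ≤ ∑' i, |β i * a i * u i| :=
        norm_tsum_le_tsum_norm (summable_mul_mul_of_summable_sq hβ ha hu).norm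
    _ ≤ ∑' i, (t * (β i * a i ^ 2) + t⁻¹ * (β i * u i ^ 2)) / 2 :=
        (summable_mul_mul_of_summable_sq hβ ha hu).abs.tsum_le_tsum
          (fun i => abs_mul_mul_le_of_pos (hβ i) ht) hbound
    _ = _ := by rw [tsum_div_const, (ha.mul_left t).tsum_add (hu.mul_left t⁻¹), tsum_mul_left,
        tsum_mul_left]

theorem tendsto_tsum_mul_mul_zero {u : ℕ → ι → ℝ} {M : ℝ} (hβ : ∀ i, 0 ≤ β i)
    (ha : Summable fun i => β i * a i ^ 2)
    (hu : ∀ᶠ n in atTop,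
      Summable (fun i => β i * u n i ^ 2) ∧ ∑' i, β i * u n i ^ 2 ≤ M)
    (hpt : ∀ i, Tendsto (fun n => u n i) atTop (𝓝 0)) :
    Tendsto (fun n => ∑' i, β i * a i * u n i) atTop (𝓝 0) := by
  rw [NormedAddGroup.tendsto_nhds_zero]
  intro ε hε
  obtain ⟨t, ht, htM⟩ : ∃ t > 0, t⁻¹ * M < ε / 2 :=
    ((eventually_gt_atTop 0).and ((tendsto_inv_atTop_zero.mul_const M).eventually
      (gt_mem_nhds (by simpa using half_pos hε)))).exists
  obtain ⟨S, hS⟩ : ∃ S : Finset ι, t * ∑' i : {i // i ∉ S}, β i * a i ^ 2 < ε / 2 :=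
    (((tendsto_tsum_compl_atTop_zero fun i => β i * a i ^ 2).const_mul t).eventually
      (gt_mem_nhds (by simpa using half_pos hε))).exists
  have hfin : Tendsto (fun n => ∑ i ∈ S, β i * a i * u n i) atTop (𝓝 0) := by
    simpa using tendsto_finsetSum S fun i _ => (hpt i).const_mul (β i * a i)
  filter_upwards [hu, (NormedAddGroup.tendsto_nhds_zero.mp hfin) (ε / 2) (half_pos hε)]
    with n ⟨hun, hunM⟩ hSn
  have hinj : Function.Injective ((↑) : {i // i ∉ S} → ι) := Subtype.val_injective
  have htail := abs_tsum_mul_mul_le (β := fun i : {i // i ∉ S} => β i) (a := fun i => a i)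
    (u := fun i => u n i) (fun i => hβ i) (ha.comp_injective hinj) (hun.comp_injective hinj) ht
  have hun_tail : ∑' i : {i // i ∉ S}, β i * u n i ^ 2 ≤ M :=
    (tsum_comp_le_tsum_of_inj hun (fun i => mul_nonneg (hβ i) (sq_nonneg _)) hinj).trans hunM
  have ht' : t⁻¹ * ∑' i : {i // i ∉ S}, β i * u n i ^ 2 ≤ t⁻¹ * M := by gcongr
  rw [Real.norm_eq_abs] at hSn ⊢
  rw [← (summable_mul_mul_of_summable_sq hβ ha hun).sum_add_tsum_subtype_compl S]
  calc _ ≤ |∑ i ∈ S, β i * a i * u n i| + |∑' i : {i // i ∉ S}, β i * a i * u n i| :=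
        abs_add_le _ _
    _ < ε := by linarith

theorem summable_mul_and_tsum_eq_of_tendsto {g v : ι → ℝ} {ψ : ℕ → ι → ℝ} {L : ℝ}
    (hψ_nonneg : ∀ n i, 0 ≤ ψ n i) (hψ_le : ∀ n i, ψ n i ≤ v i)
    (hψ_lim : ∀ i, Tendsto (fun n => ψ n i) atTop (𝓝 (v i)))
    (hsum : ∀ n, Summable fun i => g i * ψ n i)
    (hL : Tendsto (fun n => ∑' i, g i * ψ n i) atTop (𝓝 L))
    (hneg : Summable fun i => max (-(g i * v i)) 0) :
    Summable (fun i => g i * v i) ∧ ∑' i, g i * v i = L := by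
  set gp : ι → ℝ := fun i => max (g i) 0
  set gn : ι → ℝ := fun i => max (-g i) 0
  have hv : ∀ i, 0 ≤ v i := fun i => (hψ_nonneg 0 i).trans (hψ_le 0 i)
  have hgn : Summable fun i => gn i * v i := by
    simpa only [gn, max_mul_of_nonneg _ _ (hv _), zero_mul, neg_mul] using hneg
  have hdom : ∀ {f : ι → ℝ}, (∀ i, 0 ≤ f i) →
      ∀ n i, ‖f i * ψ n i‖ ≤ f i * v i := fun hf n i => by
    rw [Real.norm_eq_abs, abs_of_nonneg (mul_nonneg (hf i) (hψ_nonneg n i))]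
    exact mul_le_mul_of_nonneg_left (hψ_le n i) (hf i)
  have hgp_nonneg : ∀ i, 0 ≤ gp i := fun i => le_max_right _ _
  have hgn_nonneg : ∀ i, 0 ≤ gn i := fun i => le_max_right _ _
  have hgn_lim : Tendsto (fun n => ∑' i, gn i * ψ n i) atTop (𝓝 (∑' i, gn i * v i)) :=
    tendsto_tsum_of_dominated_convergence hgn (fun i => (hψ_lim i).const_mul _)
      (.of_forall (hdom hgn_nonneg))
  have hgnψ : ∀ n, Summable fun i => gn i * ψ n i := fun n =>
    .of_norm_bounded hgn (hdom hgn_nonneg n)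
  have hgpψ_eq : ∀ n i, gp i * ψ n i = g i * ψ n i + gn i * ψ n i := fun n i => by
    linear_combination ψ n i * max_zero_sub_max_neg_zero_eq_self (g i)
  have hgpψ : ∀ n, Summable fun i => gp i * ψ n i := fun n =>
    ((hsum n).add (hgnψ n)).congr fun i => (hgpψ_eq n i).symm
  have hsplit : ∀ n, ∑' i, gp i * ψ n i = ∑' i, g i * ψ n i + ∑' i, gn i * ψ n i :=
    fun n => by rw [← (hsum n).tsum_add (hgnψ n), tsum_congr (hgpψ_eq n)]
  have hgp_lim :
      Tendsto (fun n => ∑' i, gp i * ψ n i) atTop (𝓝 (L + ∑' i, gn i * v i)) := by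
    simpa only [hsplit] using hL.add hgn_lim
  have hgp : Summable fun i => gp i * v i := by
    refine summable_of_sum_le (c := L + ∑' i, gn i * v i)
      (fun i => mul_nonneg (hgp_nonneg i) (hv i)) fun s => ?_
    refine le_of_tendsto_of_tendsto' (tendsto_finsetSum s fun i _ => (hψ_lim i).const_mul (gp i))
      hgp_lim fun n => ?_
    exact (hgpψ n).sum_le_tsum s fun i _ => mul_nonneg (hgp_nonneg i) (hψ_nonneg n i)
  have hgp_eq : ∑' i, gp i * v i = L + ∑' i, gn i * v i :=
    tendsto_nhds_unique (tendsto_tsum_of_dominated_convergence hgp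
      (fun i => (hψ_lim i).const_mul _) (.of_forall (hdom hgp_nonneg))) hgp_lim
  have hg : ∀ i, g i * v i = gp i * v i - gn i * v i := fun i => by
    rw [← sub_mul, max_zero_sub_max_neg_zero_eq_self]
  refine ⟨(hgp.sub hgn).congr fun i => (hg i).symm, ?_⟩
  rw [tsum_congr hg, hgp.tsum_sub hgn, hgp_eq]
  ring

lemma summable_abs_iff_summable_max_neg {h : ι → ℝ}
    (hneg : Summable (fun i => max (-h i) 0) → Summable h) :
    Summable (fun i => |h i|) ↔ Summable fun i => max (-h i) 0 :=
  ⟨fun hs => hs.of_nonneg_of_le (fun _ => le_max_right _ _)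
    fun _ => max_le (neg_le_abs _) (abs_nonneg _), fun hs => (hneg hs).abs⟩

lemma summable_abs_two_mul_sub_iff {h d : ι → ℝ} (hd : ∀ i, 0 ≤ d i)
    (hds : Summable d) (hneg : Summable (fun i => max (-h i) 0) → Summable h) :
    Summable (fun i => |2 * h i - d i|) ↔ Summable fun i => |h i| := by
  refine ⟨fun hs => (summable_abs_iff_summable_max_neg hneg).mpr ?_, fun hs => ?_⟩
  · exact (hs.mul_left (1 / 2)).of_nonneg_of_le (fun _ => le_max_right _ _) fun i =>
      max_le (by linarith [hd i, neg_abs_le (2 * h i - d i)]) (by positivity)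
  · refine ((hs.mul_left 2).add hds).of_nonneg_of_le (fun _ => abs_nonneg _) fun i => ?_
    calc |2 * h i - d i| ≤ |2 * h i| + |d i| := abs_sub _ _
      _ = 2 * |h i| + d i := by rw [abs_mul, abs_two, abs_of_nonneg (hd i)]

end Series

section Laplacian

variable {b : X → X → ℝ} {c m : X → ℝ}

/-- Discrete Green formula. -/
theorem tsum_tsum_mul_eq_half_tsum_of_antisymm {K : X → X → ℝ} (hK : ∀ x y, K y x = -K x y)
    (hrow : ∀ x, Summable fun y => |K x y|) {φ : X → ℝ} (hφ : FinSupp φ) :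
    ∑' x, (∑' y, K x y) * φ x = 1 / 2 * ∑' p : X × X, K p.1 p.2 * (φ p.1 - φ p.2) := by
  set F : X × X → ℝ := fun p => K p.1 p.2 * φ p.1
  have hF : Summable F := by
    refine (summable_abs_iff.mp ((summable_prod_of_nonneg fun _ => abs_nonneg _).mpr ⟨?_, ?_⟩))
    · exact fun x => by simpa only [F, abs_mul] using (hrow x).mul_right |φ x|
    · refine summable_of_hasFiniteSupport (hφ.subset fun x hx => ?_)
      contrapose! hx
      simp [F, Function.notMem_support.mp hx]
  have hswap : ∑' p : X × X, K p.1 p.2 * φ p.2 = -∑' p, F p := by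
    rw [← tsum_neg, ← (Equiv.prodComm X X).tsum_eq]
    exact tsum_congr fun p => by simp [F, hK p.1 p.2]
  have hF' : Summable fun p : X × X => K p.1 p.2 * φ p.2 :=
    (((Equiv.prodComm X X).summable_iff.mpr hF).neg).congr fun p => by simp [F, hK p.1 p.2]
  calc ∑' x, (∑' y, K x y) * φ x = ∑' p, F p := by
        rw [hF.tsum_prod' fun x => by simpa only [F] using (hrow x).of_abs.mul_right (φ x)]
        exact tsum_congr fun x => tsum_mul_right.symm
    _ = 1 / 2 * ∑' p : X × X, K p.1 p.2 * (φ p.1 - φ p.2) := by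
        simp only [mul_sub]
        rw [hF.tsum_sub hF', hswap]
        ring

lemma mul_lap {x : X} (hm : m x ≠ 0) (f : X → ℝ) :
    m x * lap b c m f x = ∑' y, b x y * (f x - f y) + c x * f x := by
  rw [lap]
  field_simp

lemma summable_mul_abs_sub {x : X} (hb : ∀ y, 0 ≤ b x y) (hdeg : Summable fun y => b x y)
    {f : X → ℝ} (h₂ : Summable fun y => b x y * (f x - f y) ^ 2) :
    Summable fun y => b x y * |f x - f y| :=
  .of_nonneg_of_le (fun y => mul_nonneg (hb y) (abs_nonneg _))
    (fun y => by
      nlinarith [hb y, mul_nonneg (hb y) (sq_nonneg (|f x - f y| - 1)), sq_abs (f x - f y)])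
    (hdeg.add h₂)

lemma mul_lap_sq (hg : IsGraph b c m) {f : X → ℝ}
    (hf : Summable fun p : X × X => b p.1 p.2 * (f p.1 - f p.2) ^ 2) (x : X) :
    m x * lap b c m (fun y => f y ^ 2) x
      = 2 * (m x * lap b c m f x * f x) - (∑' y, b x y * (f x - f y) ^ 2 + c x * f x ^ 2) := by
  have h₁ : Summable fun y => b x y * (f x - f y) :=
    .of_norm_bounded (summable_mul_abs_sub (hg.nonneg x) (hg.deg_summable x) (hf.prod_factor x))
      fun y => by rw [Real.norm_eq_abs, abs_mul, abs_of_nonneg (hg.nonneg x y)]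
  have hsq : ∑' y, b x y * (f x ^ 2 - f y ^ 2)
      = 2 * f x * ∑' y, b x y * (f x - f y) - ∑' y, b x y * (f x - f y) ^ 2 := by
    rw [← tsum_mul_left, ← (h₁.mul_left _).tsum_sub (hf.prod_factor x)]
    exact tsum_congr fun y => by ring
  rw [mul_lap (hg.m_pos x).ne', mul_lap (hg.m_pos x).ne', hsq]
  ring

theorem tsum_mul_lap_mul_eq (hg : IsGraph b c m) {f φ : X → ℝ}
    (hrow : ∀ x, Summable fun y => b x y * |f x - f y|) (hφ : FinSupp φ) :
    ∑' x, m x * lap b c m f x * φ x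
      = 1 / 2 * ∑' p : X × X, b p.1 p.2 * (f p.1 - f p.2) * (φ p.1 - φ p.2)
        + ∑' x, c x * f x * φ x := by
  have hfin : ∀ g : X → ℝ, Summable fun x => g x * φ x := fun g =>
    summable_of_hasFiniteSupport (hφ.subset (Function.support_mul_subset_right _ _))
  have hgreen := tsum_tsum_mul_eq_half_tsum_of_antisymm (K := fun x y => b x y * (f x - f y))
    (fun x y => by rw [hg.symm]; ring)
    (fun x => by simpa only [abs_mul, abs_of_nonneg (hg.nonneg _ _)] using hrow x) hφ
  calc ∑' x, m x * lap b c m f x * φ x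
      = ∑' x, ((∑' y, b x y * (f x - f y)) * φ x + c x * f x * φ x) :=
        tsum_congr fun x => by rw [mul_lap (hg.m_pos x).ne']; ring
    _ = _ := by rw [(hfin _).tsum_add (hfin _), hgreen]

lemma hasSum_tsum_mul_sub_sq_add {f : X → ℝ}
    (hP : Summable fun p : X × X => b p.1 p.2 * (f p.1 - f p.2) ^ 2)
    (hC : Summable fun x => c x * f x ^ 2) :
    HasSum (fun x => ∑' y, b x y * (f x - f y) ^ 2 + c x * f x ^ 2)
      (∑' p : X × X, b p.1 p.2 * (f p.1 - f p.2) ^ 2 + ∑' x, c x * f x ^ 2) :=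
  (hP.hasSum.prod_fiberwise fun x => (hP.prod_factor x).hasSum).add hC.hasSum

end Laplacian

section GroundState

variable {b : X → X → ℝ} {c m : X → ℝ}

theorem tendsto_tsum_mul_sub_mul_sub (hb : ∀ x y, 0 ≤ b x y) {v : X → ℝ}
    {ψ : ℕ → X → ℝ} {M : ℝ}
    (hv : Summable fun p : X × X => b p.1 p.2 * (v p.1 - v p.2) ^ 2)
    (hbound : ∀ᶠ n in atTop,
      Summable (fun p : X × X => b p.1 p.2 * ((v p.1 - ψ n p.1) - (v p.2 - ψ n p.2)) ^ 2) ∧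
      ∑' p : X × X, b p.1 p.2 * ((v p.1 - ψ n p.1) - (v p.2 - ψ n p.2)) ^ 2 ≤ M)
    (hψ : ∀ x, Tendsto (fun n => ψ n x) atTop (𝓝 (v x))) :
    Tendsto (fun n => ∑' p : X × X, b p.1 p.2 * (v p.1 - v p.2) * (ψ n p.1 - ψ n p.2)) atTop
      (𝓝 (∑' p : X × X, b p.1 p.2 * (v p.1 - v p.2) ^ 2)) := by
  have hbp : ∀ p : X × X, 0 ≤ b p.1 p.2 := fun p => hb _ _
  have hdiff : ∀ x, Tendsto (fun n => v x - ψ n x) atTop (𝓝 0) := fun x => by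
    simpa using (tendsto_const_nhds (x := v x)).sub (hψ x)
  have hcross := tendsto_tsum_mul_mul_zero hbp hv hbound fun p => by
    simpa using (hdiff p.1).sub (hdiff p.2)
  have hlim :=
    (tendsto_const_nhds (x := ∑' p : X × X, b p.1 p.2 * (v p.1 - v p.2) ^ 2)).sub hcross
  rw [sub_zero] at hlim
  refine hlim.congr' ?_
  filter_upwards [hbound] with n hn
  rw [← hv.tsum_sub (summable_mul_mul_of_summable_sq hbp hv hn.1)]
  exact tsum_congr fun p => by ring

theorem summable_mul_lap_mul_and_tsum_eq_energy (hg : IsGraph b c m) {o : X} {v : X → ℝ}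
    (hv : MemD0 b c o v) (hv_nonneg : ∀ x, 0 ≤ v x)
    (hneg : Summable fun x => max (-(m x * lap b c m v x * v x)) 0) :
    Summable (fun x => m x * lap b c m v x * v x) ∧
      ∑' x, m x * lap b c m v x * v x = (energy b c v).toReal := by
  obtain ⟨ψ, hψ_fin, hψ_nonneg, hψ_le, hψ_lim, hψ_energy⟩ :=
    hv.exists_approx_between hg hv_nonneg
  obtain ⟨hP, hC, hE⟩ := energy_toReal_eq hg.nonneg hg.c_nonneg (hv.energy_ne_top hg)
  have hrow : ∀ x, Summable fun y => b x y * |v x - v y| := fun x =>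
    summable_mul_abs_sub (hg.nonneg x) (hg.deg_summable x) (hP.prod_factor x)
  have hbound : ∀ᶠ n in atTop,
      Summable (fun p : X × X => b p.1 p.2 * ((v p.1 - ψ n p.1) - (v p.2 - ψ n p.2)) ^ 2) ∧
      ∑' p : X × X, b p.1 p.2 * ((v p.1 - ψ n p.1) - (v p.2 - ψ n p.2)) ^ 2
        ≤ 2 * (8 * energy b c v + 4).toReal := by
    filter_upwards [hψ_energy] with n hn
    have hfin : 8 * energy b c v + 4 ≠ ⊤ := by
      have := hv.energy_ne_top hg
      finiteness
    obtain ⟨hPn, -, hEn⟩ :=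
      energy_toReal_eq hg.nonneg hg.c_nonneg (ne_top_of_le_ne_top hfin hn)
    refine ⟨hPn, ?_⟩
    have := ENNReal.toReal_mono hfin hn
    have : 0 ≤ ∑' x, c x * (v x - ψ n x) ^ 2 :=
      tsum_nonneg fun x => mul_nonneg (hg.c_nonneg x) (sq_nonneg _)
    linarith
  have hc_lim :
      Tendsto (fun n => ∑' x, c x * v x * ψ n x) atTop (𝓝 (∑' x, c x * v x ^ 2)) := by
    refine tendsto_tsum_of_dominated_convergence hC (fun x => ?_) (.of_forall fun n x => ?_)
    · simpa [pow_two, mul_assoc] using (hψ_lim x).const_mul (c x * v x)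
    · rw [Real.norm_eq_abs, pow_two, ← mul_assoc,
        abs_of_nonneg (mul_nonneg (mul_nonneg (hg.c_nonneg x) (hv_nonneg x)) (hψ_nonneg n x))]
      exact mul_le_mul_of_nonneg_left (hψ_le n x) (mul_nonneg (hg.c_nonneg x) (hv_nonneg x))
  rw [hE]
  refine summable_mul_and_tsum_eq_of_tendsto hψ_nonneg hψ_le hψ_lim
    (fun n => summable_of_hasFiniteSupport
      ((hψ_fin n).subset (Function.support_mul_subset_right _ _)))
    ?_ hneg
  simp only [tsum_mul_lap_mul_eq hg hrow (hψ_fin _)]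
  exact ((tendsto_tsum_mul_sub_mul_sub hg.nonneg hP hbound hψ_lim).const_mul _).add hc_lim

theorem summable_abs_mul_lap_sq_iff_and_tsum_eq (hg : IsGraph b c m) {o : X} {v : X → ℝ}
    (hv : MemD0 b c o v) (hv_nonneg : ∀ x, 0 ≤ v x) :
    ((Summable fun x => |m x * lap b c m (fun y => v y ^ 2) x|) ↔
      Summable fun x => |m x * lap b c m v x * v x|) ∧
    ((Summable fun x => |m x * lap b c m v x * v x|) ↔
      Summable fun x => max (-(m x * lap b c m v x * v x)) 0) ∧
    ((Summable fun x => |m x * lap b c m (fun y => v y ^ 2) x|) →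
      (energy b c v).toReal = ∑' x, m x * lap b c m v x * v x ∧
      ∑' x, m x * lap b c m (fun y => v y ^ 2) x = ∑' x, c x * v x ^ 2) := by
  obtain ⟨hP, hC, hE⟩ := energy_toReal_eq hg.nonneg hg.c_nonneg (hv.energy_ne_top hg)
  have hd := hasSum_tsum_mul_sub_sq_add hP hC
  have hd_nonneg : ∀ x, 0 ≤ ∑' y, b x y * (v x - v y) ^ 2 + c x * v x ^ 2 := fun x =>
    add_nonneg (tsum_nonneg fun y => mul_nonneg (hg.nonneg x y) (sq_nonneg _))
      (mul_nonneg (hg.c_nonneg x) (sq_nonneg _))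
  have hcore := summable_mul_lap_mul_and_tsum_eq_energy hg hv hv_nonneg
  have hiff₁ := summable_abs_two_mul_sub_iff hd_nonneg hd.summable fun h => (hcore h).1
  have hiff₂ := summable_abs_iff_summable_max_neg fun h => (hcore h).1
  simp only [mul_lap_sq hg hP]
  refine ⟨hiff₁, hiff₂, fun h => ?_⟩
  obtain ⟨hs, htsum⟩ := hcore (hiff₂.mp (hiff₁.mp h))
  refine ⟨htsum.symm, ?_⟩
  rw [(hs.mul_left 2).tsum_sub hd.summable, tsum_mul_left, htsum, hd.tsum_eq, hE]
  ring

end GroundState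

theorem stmt16_general {X : Type*} (b : X → X → ℝ) (c m : X → ℝ) (o : X)
    (hg : IsGraph b c m) (v : X → ℝ) (hv0 : MemD0 b c o v)
    (hvpos : ∀ x, 0 < v x) (w : X → ℝ)
    (hw : ∀ x, w x = lap b c m v x / v x) :
    ((Summable fun x => m x * |lap b c m (fun y => v y ^ 2) x|) ↔
      (Summable fun x => m x * |w x| * v x ^ 2)) ∧
    ((Summable fun x => m x * |w x| * v x ^ 2) ↔
      (Summable fun x => m x * max (-w x) 0 * v x ^ 2)) ∧
    ((Summable fun x => m x * |lap b c m (fun y => v y ^ 2) x|) →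
      (energy b c v).toReal = wsum m w v ∧
      ∑' x, m x * lap b c m (fun y => v y ^ 2) x = ∑' x, c x * v x ^ 2) := by
  have hgv : ∀ x, m x * lap b c m v x * v x = m x * w x * v x ^ 2 := fun x => by
    rw [hw x]
    field_simp [(hvpos x).ne']
  have habs : ∀ x, m x * |w x| * v x ^ 2 = |m x * w x * v x ^ 2| := fun x => by
    rw [abs_mul, abs_mul, abs_of_pos (hg.m_pos x), abs_of_nonneg (sq_nonneg (v x))]
  have hneg : ∀ x, m x * max (-w x) 0 * v x ^ 2 = max (-(m x * w x * v x ^ 2)) 0 := fun x => by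
    rw [mul_comm (m x), mul_assoc, max_mul_of_nonneg _ _ (by have := hg.m_pos x; positivity)]
    ring_nf
  have habs_lap : ∀ x, m x * |lap b c m (fun y => v y ^ 2) x|
      = |m x * lap b c m (fun y => v y ^ 2) x| := fun x => by
    rw [abs_mul, abs_of_pos (hg.m_pos x)]
  have key := summable_abs_mul_lap_sq_iff_and_tsum_eq hg hv0 fun x => (hvpos x).le
  simpa only [hgv, habs, hneg, habs_lap, wsum] using key

/-- Proposition 3.10. Let `v ∈ 𝓓₀`, `v > 0` and
`w = 𝓛v/v`. Then the following are equivalent: (i) `𝓛v² ∈ ℓ¹(X,m)`;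
(ii) `v ∈ ℓ²(X,|w|m)`; (iii) `v ∈ ℓ²(X,w₋m)`. If these hold, then
`𝓠(v) = w(v)` and `∑_x m(x) 𝓛v²(x) = ∑_x c(x) v(x)²`. -/
theorem stmt16 {X : Type*} [Countable X] (b : X → X → ℝ) (c m : X → ℝ) (o : X)
    (hg : IsGraph b c m) (v : X → ℝ) (hv0 : MemD0 b c o v)
    (hvpos : ∀ x, 0 < v x) (w : X → ℝ)
    (hw : ∀ x, w x = lap b c m v x / v x) :
    ((Summable fun x => m x * |lap b c m (fun y => v y ^ 2) x|) ↔
      (Summable fun x => m x * |w x| * v x ^ 2)) ∧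
    ((Summable fun x => m x * |w x| * v x ^ 2) ↔
      (Summable fun x => m x * max (-w x) 0 * v x ^ 2)) ∧
    ((Summable fun x => m x * |lap b c m (fun y => v y ^ 2) x|) →
      (energy b c v).toReal = wsum m w v ∧
      ∑' x, m x * lap b c m (fun y => v y ^ 2) x = ∑' x, c x * v x ^ 2) :=
  stmt16_general b c m o hg v hv0 hvpos w hw

end HG
end
end

section
/- Let (b,c) be a connected graph over (X,m). If v ∈ 𝓓₀ with v > 0 is superharmonic, then 𝓛v² ∈ ℓ¹(X,m) and ∑_x m(x)·𝓛v²(x) = ∑_x c(x)·v(x)². -/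
open Filter MeasureTheory Topology
open scoped ENNReal NNReal

noncomputable section

namespace HG

variable {X : Type*}

open scoped Classical

/-! ### Auxiliary machinery for `stmt17` -/

section Aux

variable {Y : Type*}

/-- The summand of the `b`-part of the energy, as a function on pairs. -/
def qf (b : Y → Y → ℝ) (f : Y → ℝ) : Y × Y → ℝ :=
  fun p => b p.1 p.2 * (f p.1 - f p.2) ^ 2

lemma qf_nonneg {b : Y → Y → ℝ} (hb : ∀ x y, 0 ≤ b x y) (f : Y → ℝ) (p : Y × Y) :
    0 ≤ qf b f p := mul_nonneg (hb _ _) (sq_nonneg _)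

/-- Conversion from an `ℝ≥0∞`-valued `tsum` of `ofReal`s to a real `tsum`. -/
lemma real_of_ofReal {g : Y → ℝ} (hg : ∀ i, 0 ≤ g i)
    (h : ∑' i, ENNReal.ofReal (g i) ≠ ⊤) :
    Summable g ∧ ∑' i, g i = (∑' i, ENNReal.ofReal (g i)).toReal := by
  have h1 := ENNReal.summable_toReal h
  have h2 : (fun i => (ENNReal.ofReal (g i)).toReal) = g :=
    funext fun i => ENNReal.toReal_ofReal (hg i)
  rw [h2] at h1
  refine ⟨h1, ?_⟩
  rw [ENNReal.tsum_toReal_eq (fun i => ENNReal.ofReal_ne_top), h2]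

/-- Cauchy–Schwarz for real `tsum`s. -/
lemma tsum_cs {F G : Y → ℝ} (hF : Summable fun i => F i ^ 2)
    (hG : Summable fun i => G i ^ 2) :
    Summable (fun i => F i * G i) ∧
      |∑' i, F i * G i| ≤ Real.sqrt (∑' i, F i ^ 2) * Real.sqrt (∑' i, G i ^ 2) := by
  have habs : Summable fun i => |F i * G i| := by
    refine Summable.of_nonneg_of_le (fun i => abs_nonneg _)
      (fun i => ?_) ((hF.add hG).mul_left (1/2 : ℝ))
    have : |F i * G i| = |F i| * |G i| := abs_mul _ _
    nlinarith [sq_nonneg (|F i| - |G i|), sq_abs (F i), sq_abs (G i)]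
  have hFG : Summable fun i => F i * G i := habs.of_abs
  refine ⟨hFG, ?_⟩
  have habs' : Summable fun i => ‖F i * G i‖ :=
    habs.congr fun i => (Real.norm_eq_abs _).symm
  have h1 : ‖∑' i, F i * G i‖ ≤ ∑' i, ‖F i * G i‖ := norm_tsum_le_tsum_norm habs'
  rw [Real.norm_eq_abs] at h1
  rw [tsum_congr (fun i => Real.norm_eq_abs (F i * G i))] at h1
  refine h1.trans ?_
  refine Summable.tsum_le_of_sum_le habs fun s => ?_
  have hcs := Finset.sum_mul_sq_le_sq_mul_sq s (fun i => |F i|) (fun i => |G i|)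
  simp only [sq_abs] at hcs
  have h2 : ∑ i ∈ s, |F i * G i| = ∑ i ∈ s, |F i| * |G i| := by
    refine Finset.sum_congr rfl fun i _ => abs_mul _ _
  rw [h2]
  have hs1 : ∑ i ∈ s, F i ^ 2 ≤ ∑' i, F i ^ 2 :=
    Summable.sum_le_tsum s (fun i _ => sq_nonneg _) hF
  have hs2 : ∑ i ∈ s, G i ^ 2 ≤ ∑' i, G i ^ 2 :=
    Summable.sum_le_tsum s (fun i _ => sq_nonneg _) hG
  have hnn : 0 ≤ ∑ i ∈ s, |F i| * |G i| :=
    Finset.sum_nonneg fun i _ => mul_nonneg (abs_nonneg _) (abs_nonneg _)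
  have := Real.sqrt_le_sqrt hcs
  rw [Real.sqrt_sq hnn] at this
  refine this.trans ?_
  rw [Real.sqrt_mul (by positivity : (0:ℝ) ≤ ∑ i ∈ s, F i ^ 2)]
  exact mul_le_mul (Real.sqrt_le_sqrt hs1) (Real.sqrt_le_sqrt hs2)
    (Real.sqrt_nonneg _) (Real.sqrt_nonneg _)

/-- A clamp-type two-variable contraction estimate. -/
lemma clamp_diff_le {ax ay vx vy : ℝ} (hvx : 0 < vx) (hvy : 0 < vy) :
    |min (max ax 0) vx - min (max ay 0) vy| ≤
      |ax - ay| + (if vx ≤ ax ∨ vy ≤ ay then |vx - vy| else 0) := by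
  by_cases h : vx ≤ ax ∨ vy ≤ ay
  · rw [if_pos h]
    calc |min (max ax 0) vx - min (max ay 0) vy|
        ≤ |min (max ax 0) vx - min (max ay 0) vx|
            + |min (max ay 0) vx - min (max ay 0) vy| := abs_sub_le _ _ _
      _ ≤ |ax - ay| + |vx - vy| := by
          refine add_le_add ?_ ?_
          · refine (abs_min_sub_min_le_max _ _ _ _).trans ?_
            have h0 : |vx - vx| = 0 := by simp
            rw [h0, max_eq_left (abs_nonneg _)]
            exact abs_max_sub_max_le_abs ax ay 0
          · refine (abs_min_sub_min_le_max _ _ _ _).trans ?_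
            have h0 : |max ay 0 - max ay 0| = 0 := by simp
            rw [h0, max_eq_right (abs_nonneg _)]
  · rw [if_neg h]
    push_neg at h
    obtain ⟨h1, h2⟩ := h
    rw [min_eq_left (le_of_lt (max_lt h1 hvx)), min_eq_left (le_of_lt (max_lt h2 hvy))]
    simpa using abs_max_sub_max_le_abs ax ay 0

lemma sub_clamp (φx vx : ℝ) (hv : 0 < vx) :
    vx - max 0 (min φx vx) = min (max (vx - φx) 0) vx := by
  rcases le_total φx 0 with h | h <;> rcases le_total φx vx with h1 | h1 <;>
    simp [max_def, min_def] <;> split_ifs <;> linarith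

end Aux

section Graph

variable {X : Type*} {b : X → X → ℝ} {c m : X → ℝ}

/-- Finitely supported functions have summable energy summands. -/
lemma summable_qf_finsupp (hg : IsGraph b c m) {φ : X → ℝ} (hφ : FinSupp φ) :
    Summable (qf b φ) := by
  classical
  set S : Finset X := hφ.toFinset with hS
  have hmem : ∀ x, x ∈ S ↔ φ x ≠ 0 := by
    intro x; rw [hS]; exact hφ.mem_toFinset
  have hslice : ∀ x, Summable fun y => qf b φ (x, y) := by
    intro x
    have h1 : Summable fun y => b x y * φ x ^ 2 := (hg.deg_summable x).mul_right _
    have h2 : Summable fun y => b x y * (2 * φ x * φ y - φ y ^ 2) := by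
      refine summable_of_ne_finset_zero (s := S) fun y hy => ?_
      have : φ y = 0 := by by_contra hne; exact hy ((hmem y).2 hne)
      simp [this]
    have := h1.sub h2
    refine this.congr fun y => ?_
    simp only [qf]; ring
  -- the marginal
  have hmarg0 : ∀ x ∉ S, (∑' y, qf b φ (x, y)) = ∑ y ∈ S, b x y * φ y ^ 2 := by
    intro x hx
    have hφx : φ x = 0 := by
      by_contra hne; exact hx ((hmem x).2 hne)
    have : ∀ y, qf b φ (x, y) = (fun y => b x y * φ y ^ 2) y := by
      intro y; simp only [qf, hφx]; ring
    rw [tsum_congr this]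
    exact tsum_eq_sum fun y hy => by
      have : φ y = 0 := by by_contra hne; exact hy ((hmem y).2 hne)
      simp [this]
  have hh : Summable fun x => ∑ y ∈ S, b x y * φ y ^ 2 := by
    refine summable_sum fun y _ => ?_
    have hby : Summable fun x => b x y := by
      have := hg.deg_summable y
      exact this.congr fun x => hg.symm y x
    exact hby.mul_right _
  have hdiff : Summable fun x =>
      (∑' y, qf b φ (x, y)) - ∑ y ∈ S, b x y * φ y ^ 2 := by
    refine summable_of_ne_finset_zero (s := S) fun x hx => ?_
    rw [hmarg0 x hx]; ring
  have hmarg : Summable fun x => ∑' y, qf b φ (x, y) := by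
    have := hh.add hdiff
    refine this.congr fun x => by ring
  exact (summable_prod_of_nonneg (fun p => qf_nonneg hg.nonneg φ p)).2 ⟨hslice, hmarg⟩

end Graph

section Graph2

variable {X : Type*} {b : X → X → ℝ} {c m : X → ℝ}

lemma summable_bdiff (hg : IsGraph b c m) {v : X → ℝ} (hv : MemF b v) (x : X) :
    Summable fun y => b x y * (v x - v y) := by
  have h1 : Summable fun y => b x y * v x := (hg.deg_summable x).mul_right _
  have h2 : Summable fun y => b x y * v y := by
    have habs : Summable fun y => |b x y * v y| := (hv x).congr fun y => by
      rw [abs_mul, abs_of_nonneg (hg.nonneg x y)]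
    exact habs.of_abs
  exact (h1.sub h2).congr fun y => by ring

set_option maxHeartbeats 1000000 in
/-- Green's formula for a finitely supported test function against `v ∈ 𝓕 ∩ 𝓓`. -/
lemma green_cc (hg : IsGraph b c m) {v : X → ℝ} (hv : MemF b v)
    (hqv : Summable (qf b v)) {φ : X → ℝ} (hφ : FinSupp φ) :
    Summable (fun p : X × X => b p.1 p.2 * (φ p.1 - φ p.2) * (v p.1 - v p.2)) ∧
    ∑' x, φ x * ((∑' y, b x y * (v x - v y)) + c x * v x)
      = (1/2) * (∑' p : X × X, b p.1 p.2 * (φ p.1 - φ p.2) * (v p.1 - v p.2))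
        + ∑' x, c x * φ x * v x := by
  classical
  set S : Finset X := hφ.toFinset with hS
  have hmem : ∀ x, x ∈ S ↔ φ x ≠ 0 := by
    intro x; rw [hS]; exact hφ.mem_toFinset
  have hzero : ∀ x ∉ S, φ x = 0 := by
    intro x hx; by_contra hne; exact hx ((hmem x).2 hne)
  have hqφ := summable_qf_finsupp hg hφ
  have hbv : ∀ x, Summable fun y => b x y * (v x - v y) :=
    fun x => summable_bdiff hg hv x
  have hGsum : Summable
      (fun p : X × X => b p.1 p.2 * (φ p.1 - φ p.2) * (v p.1 - v p.2)) := by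
    have hbd : ∀ p : X × X, |b p.1 p.2 * (φ p.1 - φ p.2) * (v p.1 - v p.2)|
        ≤ (1/2) * (qf b φ p + qf b v p) := by
      intro p
      have hb := hg.nonneg p.1 p.2
      simp only [qf]
      rw [abs_mul, abs_mul, abs_of_nonneg hb]
      nlinarith [sq_nonneg (|φ p.1 - φ p.2| - |v p.1 - v p.2|),
        sq_abs (φ p.1 - φ p.2), sq_abs (v p.1 - v p.2),
        mul_nonneg (abs_nonneg (φ p.1 - φ p.2)) (abs_nonneg (v p.1 - v p.2))]
    have hsum2 : Summable fun p => (1/2 : ℝ) * (qf b φ p + qf b v p) :=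
      (hqφ.add hqv).mul_left _
    exact (Summable.of_nonneg_of_le (fun p => abs_nonneg _) hbd hsum2).of_abs
  have hHslice : ∀ x, Summable fun y => φ x * (b x y * (v x - v y)) :=
    fun x => (hbv x).mul_left _
  have hHabs : Summable fun p : X × X => |φ p.1 * (b p.1 p.2 * (v p.1 - v p.2))| := by
    refine (summable_prod_of_nonneg (fun p => abs_nonneg _)).2 ⟨fun x => (hHslice x).abs, ?_⟩
    refine summable_of_ne_finset_zero (s := S) fun x hx => ?_
    simp [hzero x hx, tsum_zero]
  have hHsum : Summable fun p : X × X => φ p.1 * (b p.1 p.2 * (v p.1 - v p.2)) :=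
    hHabs.of_abs
  have hs1 : Summable fun x => ∑' y, φ x * (b x y * (v x - v y)) :=
    summable_of_ne_finset_zero (s := S) fun x hx => by
      simp [hzero x hx, tsum_zero]
  have hs2 : Summable fun x => c x * φ x * v x :=
    summable_of_ne_finset_zero (s := S) fun x hx => by simp [hzero x hx]
  have hLHS : ∑' x, φ x * ((∑' y, b x y * (v x - v y)) + c x * v x)
      = (∑' x, ∑' y, φ x * (b x y * (v x - v y))) + ∑' x, c x * φ x * v x := by
    rw [← Summable.tsum_add hs1 hs2]
    refine tsum_congr fun x => ?_
    rw [mul_add]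
    congr 1
    · rw [← tsum_mul_left]
    · ring
  have hprod : ∑' x, ∑' y, φ x * (b x y * (v x - v y))
      = ∑' p : X × X, φ p.1 * (b p.1 p.2 * (v p.1 - v p.2)) :=
    (Summable.tsum_prod' hHsum hHslice).symm
  have hswapsum : Summable fun p : X × X => φ p.2 * (b p.2 p.1 * (v p.2 - v p.1)) :=
    ((Equiv.prodComm X X).summable_iff).2 hHsum
  have hswap : ∑' p : X × X, φ p.2 * (b p.2 p.1 * (v p.2 - v p.1))
      = ∑' p : X × X, φ p.1 * (b p.1 p.2 * (v p.1 - v p.2)) := by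
    have h := (Equiv.prodComm X X).tsum_eq
      (fun p : X × X => φ p.1 * (b p.1 p.2 * (v p.1 - v p.2)))
    simpa using h
  have hkey : ∀ p : X × X,
      b p.1 p.2 * (φ p.1 - φ p.2) * (v p.1 - v p.2)
        = φ p.1 * (b p.1 p.2 * (v p.1 - v p.2))
          + φ p.2 * (b p.2 p.1 * (v p.2 - v p.1)) := by
    rintro ⟨x, y⟩
    simp only
    rw [hg.symm y x]
    ring
  have hsum2 : ∑' p : X × X, b p.1 p.2 * (φ p.1 - φ p.2) * (v p.1 - v p.2)
      = 2 * ∑' p : X × X, φ p.1 * (b p.1 p.2 * (v p.1 - v p.2)) := by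
    rw [tsum_congr hkey, Summable.tsum_add hHsum hswapsum, hswap]
    ring
  refine ⟨hGsum, ?_⟩
  rw [hLHS, hprod, hsum2]
  ring

/-- Convergence in the form sense plus convergence at one vertex implies
pointwise convergence everywhere, by connectedness. -/
lemma pointwise_conv (hg : IsGraph b c m) {a : ℕ → X → ℝ}
    (hs : ∀ n, Summable (qf b (a n)))
    (hq : Tendsto (fun n => ∑' p, qf b (a n) p) atTop (𝓝 0))
    {o : X} (ho : Tendsto (fun n => a n o) atTop (𝓝 0)) (x : X) :
    Tendsto (fun n => a n x) atTop (𝓝 0) := by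
  obtain ⟨k, p, hp0, hpk, hpe⟩ := hg.connected o x
  suffices h : ∀ i, i ≤ k → Tendsto (fun n => a n (p i)) atTop (𝓝 0) by
    have := h k le_rfl; rwa [hpk] at this
  intro i
  induction i with
  | zero => intro _; rwa [hp0]
  | succ j ihj =>
    intro hjk
    have hj : Tendsto (fun n => a n (p j)) atTop (𝓝 0) :=
      ihj (le_of_lt (Nat.lt_of_succ_le hjk))
    have hbj : 0 < b (p j) (p (j + 1)) := hpe j (Nat.lt_of_succ_le hjk)
    have habs : ∀ n, |a n (p (j + 1)) - a n (p j)| ≤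
        Real.sqrt ((∑' q, qf b (a n) q) / b (p j) (p (j + 1))) := by
      intro n
      have hterm : qf b (a n) (p j, p (j + 1)) ≤ ∑' q, qf b (a n) q :=
        Summable.le_tsum (hs n) _ (fun q _ => qf_nonneg hg.nonneg _ q)
      have h2 : (a n (p (j + 1)) - a n (p j)) ^ 2
          ≤ (∑' q, qf b (a n) q) / b (p j) (p (j + 1)) := by
        rw [le_div_iff₀ hbj]
        calc (a n (p (j + 1)) - a n (p j)) ^ 2 * b (p j) (p (j + 1))
            = qf b (a n) (p j, p (j + 1)) := by simp only [qf]; ring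
          _ ≤ _ := hterm
      calc |a n (p (j + 1)) - a n (p j)|
          = Real.sqrt ((a n (p (j + 1)) - a n (p j)) ^ 2) :=
            (Real.sqrt_sq_eq_abs _).symm
        _ ≤ _ := Real.sqrt_le_sqrt h2
    have hsq : Tendsto
        (fun n => Real.sqrt ((∑' q, qf b (a n) q) / b (p j) (p (j + 1))))
        atTop (𝓝 0) := by
      have h1 := hq.div_const (b (p j) (p (j + 1)))
      rw [zero_div] at h1
      have h2 := (Real.continuous_sqrt.tendsto 0).comp h1
      simpa [Function.comp_def] using h2
    have habs0 : Tendsto (fun n => |a n (p (j + 1)) - a n (p j)|) atTop (𝓝 0) :=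
      squeeze_zero (fun n => abs_nonneg _) habs hsq
    have hd : Tendsto (fun n => a n (p (j + 1)) - a n (p j)) atTop (𝓝 0) :=
      (tendsto_zero_iff_abs_tendsto_zero _).2 habs0
    have := hj.add hd
    rw [add_zero] at this
    exact this.congr fun n => by ring

/-- From membership in `𝓓₀`, extract an approximating sequence with
real-valued summability and convergence properties. -/
lemma good_seq (hg : IsGraph b c m) {o : X} {v : X → ℝ} (hv0 : MemD0 b c o v) :
    ∃ φ : ℕ → X → ℝ, (∀ n, FinSupp (φ n)) ∧
      (∀ n, Summable (qf b fun x => v x - φ n x)) ∧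
      (∀ n, Summable fun x => c x * (v x - φ n x) ^ 2) ∧
      Tendsto (fun n => ∑' p, qf b (fun x => v x - φ n x) p) atTop (𝓝 0) ∧
      Tendsto (fun n => v o - φ n o) atTop (𝓝 0) := by
  obtain ⟨φ, hfin, ht⟩ := hv0
  set E2 : ℕ → ℝ≥0∞ :=
    fun n => ∑' p : X × X, ENNReal.ofReal (qf b (fun x => v x - φ n x) p) with hE2
  set Ec : ℕ → ℝ≥0∞ :=
    fun n => ∑' x, ENNReal.ofReal (c x * (v x - φ n x) ^ 2) with hEc
  set P : ℕ → ℝ≥0∞ := fun n => ENNReal.ofReal ((v o - φ n o) ^ 2) with hP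
  set T : ℕ → ℝ≥0∞ :=
    fun n => energy b c (fun x => v x - φ n x) + P n with hT
  have henergy : ∀ n, energy b c (fun x => v x - φ n x) = (1/2) * E2 n + Ec n := by
    intro n
    simp only [energy, hE2, hEc, qf]
    rw [ENNReal.tsum_prod']
  have h2half : (2 : ℝ≥0∞) * (1/2) = 1 := by
    rw [one_div, ENNReal.mul_inv_cancel] <;> norm_num
  have hE2le : ∀ n, E2 n ≤ 2 * T n := by
    intro n
    have h1 : (1/2 : ℝ≥0∞) * E2 n ≤ T n := by
      rw [hT]
      simp only [henergy n]
      exact le_add_right (le_add_right le_rfl)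
    calc E2 n = 2 * ((1/2) * E2 n) := by rw [← mul_assoc, h2half, one_mul]
      _ ≤ 2 * T n := mul_le_mul_right h1 2
  have hEcle : ∀ n, Ec n ≤ T n := by
    intro n
    rw [hT]
    simp only [henergy n]
    exact le_add_right (le_add_left le_rfl)
  have hPle : ∀ n, P n ≤ T n := fun n => le_add_self.trans_eq rfl
  have h2T : Tendsto (fun n => 2 * T n) atTop (𝓝 0) := by
    have := ENNReal.Tendsto.const_mul (a := 2) ht
      (Or.inr (by norm_num : (2 : ℝ≥0∞) ≠ ⊤))
    simpa using this
  have hE2t : Tendsto E2 atTop (𝓝 0) :=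
    tendsto_of_tendsto_of_tendsto_of_le_of_le tendsto_const_nhds h2T
      (fun n => zero_le) hE2le
  have hEct : Tendsto Ec atTop (𝓝 0) :=
    tendsto_of_tendsto_of_tendsto_of_le_of_le tendsto_const_nhds ht
      (fun n => zero_le) hEcle
  have hPt : Tendsto P atTop (𝓝 0) :=
    tendsto_of_tendsto_of_tendsto_of_le_of_le tendsto_const_nhds ht
      (fun n => zero_le) hPle
  have hev : ∀ᶠ n in atTop, E2 n < ⊤ ∧ Ec n < ⊤ :=
    (hE2t.eventually_lt_const (by simp : (0 : ℝ≥0∞) < ⊤)).and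
      (hEct.eventually_lt_const (by simp : (0 : ℝ≥0∞) < ⊤))
  obtain ⟨N, hN⟩ := eventually_atTop.1 hev
  have hcomp : Tendsto (fun k : ℕ => k + N) atTop atTop := tendsto_add_atTop_nat N
  have hge : ∀ k : ℕ, N ≤ k + N := fun k => Nat.le_add_left N k
  have hqnn : ∀ n (p : X × X), 0 ≤ qf b (fun x => v x - φ n x) p :=
    fun n p => qf_nonneg hg.nonneg _ p
  have hcnn : ∀ n (x : X), 0 ≤ c x * (v x - φ n x) ^ 2 :=
    fun n x => mul_nonneg (hg.c_nonneg x) (sq_nonneg _)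
  have hsumm : ∀ k, Summable (qf b fun x => v x - φ (k + N) x) :=
    fun k => (real_of_ofReal (hqnn (k + N)) (hN (k + N) (hge k)).1.ne).1
  refine ⟨fun k => φ (k + N), fun k => hfin _, hsumm, ?_, ?_, ?_⟩
  · exact fun k => (real_of_ofReal (hcnn (k + N)) (hN (k + N) (hge k)).2.ne).1
  · have h1 : Tendsto (fun k => (E2 (k + N)).toReal) atTop (𝓝 0) := by
      have := (ENNReal.tendsto_toReal (by simp : (0 : ℝ≥0∞) ≠ ⊤)).comp (hE2t.comp hcomp)
      simpa [Function.comp_def] using this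
    refine h1.congr fun k => ?_
    exact ((real_of_ofReal (hqnn (k + N)) (hN (k + N) (hge k)).1.ne).2).symm
  · have h1 : Tendsto (fun k => (P (k + N)).toReal) atTop (𝓝 0) := by
      have := (ENNReal.tendsto_toReal (by simp : (0 : ℝ≥0∞) ≠ ⊤)).comp (hPt.comp hcomp)
      simpa [Function.comp_def] using this
    have h2 : Tendsto (fun k => (v o - φ (k + N) o) ^ 2) atTop (𝓝 0) := by
      refine h1.congr fun k => ?_
      rw [hP]
      exact ENNReal.toReal_ofReal (sq_nonneg _)
    have h3 : Tendsto (fun k => |v o - φ (k + N) o|) atTop (𝓝 0) := by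
      have := (Real.continuous_sqrt.tendsto 0).comp h2
      simp only [Real.sqrt_zero] at this
      refine this.congr fun k => ?_
      exact Real.sqrt_sq_eq_abs _
    exact (tendsto_zero_iff_abs_tendsto_zero _).2 h3


lemma finsupp_zero_off {φ : X → ℝ} (hφ : FinSupp φ) :
    ∀ x ∉ hφ.toFinset, φ x = 0 := by
  intro x hx
  by_contra h
  exact hx (hφ.mem_toFinset.2 h)

end Graph2

/-- Corollary 3.11. If `v ∈ 𝓓₀` with `v > 0` is
superharmonic, then `𝓛v² ∈ ℓ¹(X,m)` and
`∑_x m(x) 𝓛v²(x) = ∑_x c(x) v(x)²`. -/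
theorem stmt17 {X : Type*} [Countable X] (b : X → X → ℝ) (c m : X → ℝ) (o : X)
    (hg : IsGraph b c m) (v : X → ℝ) (hv0 : MemD0 b c o v)
    (hvpos : ∀ x, 0 < v x) (hsup : Superharmonic b c m v) :
    (Summable fun x => m x * |lap b c m (fun y => v y ^ 2) x|) ∧
    ∑' x, m x * lap b c m (fun y => v y ^ 2) x = ∑' x, c x * v x ^ 2 := by
  classical
  obtain ⟨φ, hfin, hqa, hca, hqt, hot⟩ := good_seq hg hv0
  have hbnn := hg.nonneg
  have hv : MemF b v := hsup.1
  -- finite energy of v (b-part)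
  have hqv : Summable (qf b v) := by
    have h0 := hqa 0
    have hφ0 := summable_qf_finsupp hg (hfin 0)
    refine Summable.of_nonneg_of_le (fun p => qf_nonneg hbnn v p) (fun p => ?_)
      ((h0.add hφ0).mul_left 2)
    have hb := hbnn p.1 p.2
    simp only [qf]
    nlinarith [mul_nonneg hb (sq_nonneg ((v p.1 - φ 0 p.1 - (v p.2 - φ 0 p.2))
      - (φ 0 p.1 - φ 0 p.2)))]
  -- finite energy of v (c-part)
  have hcv : Summable fun x => c x * v x ^ 2 := by
    have h0 := hca 0
    have hcφ0 : Summable fun x => c x * φ 0 x ^ 2 :=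
      summable_of_ne_finset_zero (s := (hfin 0).toFinset) fun x hx => by
        simp [finsupp_zero_off (hfin 0) x hx]
    refine Summable.of_nonneg_of_le
      (fun x => mul_nonneg (hg.c_nonneg x) (sq_nonneg _)) (fun x => ?_)
      ((h0.add hcφ0).mul_left 2)
    have hc := hg.c_nonneg x
    nlinarith [mul_nonneg hc (sq_nonneg ((v x - φ 0 x) - φ 0 x))]
  -- pointwise convergence
  have hpx : ∀ x, Tendsto (fun n => v x - φ n x) atTop (𝓝 0) :=
    pointwise_conv hg hqa hqt hot
  have hφx : ∀ x, Tendsto (fun n => φ n x) atTop (𝓝 (v x)) := by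
    intro x
    have := (tendsto_const_nhds (x := v x) (f := atTop)).sub (hpx x)
    simpa using this
  -- the truncated sequence ψ and the remainder u
  set ψ : ℕ → X → ℝ := fun n x => max 0 (min (φ n x) (v x)) with hψdef
  have hψ_nonneg : ∀ n x, 0 ≤ ψ n x := fun n x => le_max_left _ _
  have hψ_le : ∀ n x, ψ n x ≤ v x := fun n x =>
    max_le (hvpos x).le (min_le_right _ _)
  have hψfin : ∀ n, FinSupp (ψ n) := by
    intro n
    refine (hfin n).subset fun x hx => ?_
    simp only [Function.mem_support] at hx ⊢
    intro h0
    apply hx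
    rw [hψdef]
    simp [h0, le_of_lt (hvpos x)]
  have hψx : ∀ x, Tendsto (fun n => ψ n x) atTop (𝓝 (v x)) := by
    intro x
    have h1 : Tendsto (fun n => max 0 (min (φ n x) (v x))) atTop
        (𝓝 (max 0 (min (v x) (v x)))) :=
      Tendsto.max tendsto_const_nhds ((hφx x).min tendsto_const_nhds)
    rw [min_self, max_eq_right (hvpos x).le] at h1
    exact h1
  have hu_eq : ∀ n x, v x - ψ n x = min (max (v x - φ n x) 0) (v x) :=
    fun n x => sub_clamp (φ n x) (v x) (hvpos x)
  have hux : ∀ x, Tendsto (fun n => v x - ψ n x) atTop (𝓝 0) := by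
    intro x
    have := (tendsto_const_nhds (x := v x) (f := atTop)).sub (hψx x)
    simpa using this
  -- the indicator χ
  set χ : ℕ → X × X → ℝ := fun n p =>
    if v p.1 ≤ v p.1 - φ n p.1 ∨ v p.2 ≤ v p.2 - φ n p.2 then 1 else 0 with hχdef
  have hχ01 : ∀ n p, 0 ≤ χ n p ∧ χ n p ≤ 1 := by
    intro n p
    simp only [hχdef]
    constructor
    · split_ifs <;> norm_num
    · split_ifs <;> norm_num
  -- the contraction bound
  have hbd : ∀ n (p : X × X), qf b (fun x => v x - ψ n x) p
      ≤ 2 * qf b (fun x => v x - φ n x) p + 2 * (qf b v p * χ n p) := by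
    intro n p
    have hcl := clamp_diff_le (ax := v p.1 - φ n p.1) (ay := v p.2 - φ n p.2)
      (hvpos p.1) (hvpos p.2)
    rw [← hu_eq n p.1, ← hu_eq n p.2] at hcl
    have hb := hbnn p.1 p.2
    simp only [qf, hχdef]
    by_cases hc : v p.1 ≤ v p.1 - φ n p.1 ∨ v p.2 ≤ v p.2 - φ n p.2
    · rw [if_pos hc] at hcl ⊢
      have h1 : (v p.1 - ψ n p.1 - (v p.2 - ψ n p.2)) ^ 2
          ≤ 2 * (v p.1 - φ n p.1 - (v p.2 - φ n p.2)) ^ 2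
            + 2 * (v p.1 - v p.2) ^ 2 := by
        nlinarith [hcl, abs_nonneg (v p.1 - ψ n p.1 - (v p.2 - ψ n p.2)),
          abs_nonneg (v p.1 - φ n p.1 - (v p.2 - φ n p.2)),
          abs_nonneg (v p.1 - v p.2),
          sq_abs (v p.1 - ψ n p.1 - (v p.2 - ψ n p.2)),
          sq_abs (v p.1 - φ n p.1 - (v p.2 - φ n p.2)),
          sq_abs (v p.1 - v p.2),
          sq_nonneg (|v p.1 - φ n p.1 - (v p.2 - φ n p.2)| - |v p.1 - v p.2|)]
      calc b p.1 p.2 * (v p.1 - ψ n p.1 - (v p.2 - ψ n p.2)) ^ 2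
          ≤ b p.1 p.2 * (2 * (v p.1 - φ n p.1 - (v p.2 - φ n p.2)) ^ 2
            + 2 * (v p.1 - v p.2) ^ 2) := mul_le_mul_of_nonneg_left h1 hb
        _ = 2 * (b p.1 p.2 * (v p.1 - φ n p.1 - (v p.2 - φ n p.2)) ^ 2)
            + 2 * (b p.1 p.2 * (v p.1 - v p.2) ^ 2 * 1) := by ring
    · rw [if_neg hc] at hcl ⊢
      rw [add_zero] at hcl
      have h1 : (v p.1 - ψ n p.1 - (v p.2 - ψ n p.2)) ^ 2
          ≤ (v p.1 - φ n p.1 - (v p.2 - φ n p.2)) ^ 2 := by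
        nlinarith [hcl, abs_nonneg (v p.1 - ψ n p.1 - (v p.2 - ψ n p.2)),
          sq_abs (v p.1 - ψ n p.1 - (v p.2 - ψ n p.2)),
          sq_abs (v p.1 - φ n p.1 - (v p.2 - φ n p.2))]
      have h2 := mul_le_mul_of_nonneg_left h1 hb
      nlinarith [h2]
  -- summability of the χ-weighted term, and its convergence to 0
  have hχsum : ∀ n, Summable fun p => qf b v p * χ n p := by
    intro n
    refine Summable.of_nonneg_of_le
      (fun p => mul_nonneg (qf_nonneg hbnn v p) (hχ01 n p).1) (fun p => ?_) hqv
    calc qf b v p * χ n p ≤ qf b v p * 1 :=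
        mul_le_mul_of_nonneg_left (hχ01 n p).2 (qf_nonneg hbnn v p)
      _ = qf b v p := mul_one _
  have hrt : Tendsto (fun n => ∑' p, qf b v p * χ n p) atTop (𝓝 0) := by
    have h := tendsto_tsum_of_dominated_convergence (𝓕 := atTop)
      (f := fun n p => qf b v p * χ n p) (g := fun _ => (0 : ℝ))
      (bound := qf b v) hqv ?_ ?_
    · simpa using h
    · intro p
      have hev : ∀ᶠ n in atTop, qf b v p * χ n p = 0 := by
        filter_upwards [(hpx p.1).eventually_lt_const (hvpos p.1),
          (hpx p.2).eventually_lt_const (hvpos p.2)] with n h1 h2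
        have : χ n p = 0 := by
          simp only [hχdef]
          rw [if_neg]
          push_neg
          exact ⟨h1, h2⟩
        rw [this, mul_zero]
      exact tendsto_const_nhds.congr' (hev.mono fun n h => h.symm)
    · refine Eventually.of_forall fun n p => ?_
      rw [Real.norm_eq_abs, abs_of_nonneg (mul_nonneg (qf_nonneg hbnn v p) (hχ01 n p).1)]
      calc qf b v p * χ n p ≤ qf b v p * 1 :=
          mul_le_mul_of_nonneg_left (hχ01 n p).2 (qf_nonneg hbnn v p)
        _ = qf b v p := mul_one _
  -- summability and convergence of the energy of u = v - ψ
  have hqu : ∀ n, Summable (qf b (fun x => v x - ψ n x)) := by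
    intro n
    refine Summable.of_nonneg_of_le (fun p => qf_nonneg hbnn _ p) (hbd n)
      (Summable.add ((hqa n).mul_left 2) ((hχsum n).mul_left 2))
  have hqut : Tendsto (fun n => ∑' p, qf b (fun x => v x - ψ n x) p) atTop (𝓝 0) := by
    have hle : ∀ n, ∑' p, qf b (fun x => v x - ψ n x) p
        ≤ 2 * (∑' p, qf b (fun x => v x - φ n x) p) + 2 * (∑' p, qf b v p * χ n p) := by
      intro n
      have := Summable.tsum_le_tsum (hbd n) (hqu n)
        (Summable.add ((hqa n).mul_left 2) ((hχsum n).mul_left 2))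
      rwa [Summable.tsum_add ((hqa n).mul_left 2) ((hχsum n).mul_left 2),
        tsum_mul_left, tsum_mul_left] at this
    have hlim : Tendsto (fun n => 2 * (∑' p, qf b (fun x => v x - φ n x) p)
        + 2 * (∑' p, qf b v p * χ n p)) atTop (𝓝 0) := by
      have := (hqt.const_mul (2:ℝ)).add (hrt.const_mul (2:ℝ))
      simpa using this
    exact squeeze_zero (fun n => tsum_nonneg fun p => qf_nonneg hbnn _ p) hle hlim
  -- the mixed term W and its convergence to 0
  have hW : ∀ n, Summable (fun p : X × X =>
      b p.1 p.2 * (v p.1 - ψ n p.1 - (v p.2 - ψ n p.2)) * (v p.1 - v p.2)) ∧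
      |∑' p : X × X, b p.1 p.2 * (v p.1 - ψ n p.1 - (v p.2 - ψ n p.2)) * (v p.1 - v p.2)|
        ≤ Real.sqrt (∑' p, qf b (fun x => v x - ψ n x) p) * Real.sqrt (∑' p, qf b v p) := by
    intro n
    have hF2 : Summable fun p : X × X =>
        (Real.sqrt (b p.1 p.2) * (v p.1 - ψ n p.1 - (v p.2 - ψ n p.2))) ^ 2 :=
      (hqu n).congr fun p => by
        rw [mul_pow, Real.sq_sqrt (hbnn p.1 p.2)]
        simp only [qf]
    have hG2 : Summable fun p : X × X =>
        (Real.sqrt (b p.1 p.2) * (v p.1 - v p.2)) ^ 2 :=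
      hqv.congr fun p => by
        rw [mul_pow, Real.sq_sqrt (hbnn p.1 p.2)]
        simp only [qf]
    obtain ⟨hs, hb'⟩ := tsum_cs hF2 hG2
    have heq : ∀ p : X × X,
        (Real.sqrt (b p.1 p.2) * (v p.1 - ψ n p.1 - (v p.2 - ψ n p.2)))
          * (Real.sqrt (b p.1 p.2) * (v p.1 - v p.2))
        = b p.1 p.2 * (v p.1 - ψ n p.1 - (v p.2 - ψ n p.2)) * (v p.1 - v p.2) := by
      intro p
      have hss := Real.mul_self_sqrt (hbnn p.1 p.2)
      calc (Real.sqrt (b p.1 p.2) * (v p.1 - ψ n p.1 - (v p.2 - ψ n p.2)))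
            * (Real.sqrt (b p.1 p.2) * (v p.1 - v p.2))
          = (Real.sqrt (b p.1 p.2) * Real.sqrt (b p.1 p.2))
            * ((v p.1 - ψ n p.1 - (v p.2 - ψ n p.2)) * (v p.1 - v p.2)) := by ring
        _ = b p.1 p.2 * ((v p.1 - ψ n p.1 - (v p.2 - ψ n p.2)) * (v p.1 - v p.2)) := by
            rw [hss]
        _ = b p.1 p.2 * (v p.1 - ψ n p.1 - (v p.2 - ψ n p.2)) * (v p.1 - v p.2) := by ring
    constructor
    · exact hs.congr heq
    · rw [← tsum_congr heq]
      refine hb'.trans ?_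
      have e1 : ∑' p : X × X,
          (Real.sqrt (b p.1 p.2) * (v p.1 - ψ n p.1 - (v p.2 - ψ n p.2))) ^ 2
          = ∑' p, qf b (fun x => v x - ψ n x) p := by
        refine tsum_congr fun p => ?_
        rw [mul_pow, Real.sq_sqrt (hbnn p.1 p.2)]
        simp only [qf]
      have e2 : ∑' p : X × X, (Real.sqrt (b p.1 p.2) * (v p.1 - v p.2)) ^ 2
          = ∑' p, qf b v p := by
        refine tsum_congr fun p => ?_
        rw [mul_pow, Real.sq_sqrt (hbnn p.1 p.2)]
        simp only [qf]
      rw [e1, e2]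
  have hWt : Tendsto (fun n => ∑' p : X × X,
      b p.1 p.2 * (v p.1 - ψ n p.1 - (v p.2 - ψ n p.2)) * (v p.1 - v p.2)) atTop (𝓝 0) := by
    have hbndt : Tendsto (fun n =>
        Real.sqrt (∑' p, qf b (fun x => v x - ψ n x) p) * Real.sqrt (∑' p, qf b v p))
        atTop (𝓝 0) := by
      have h1 : Tendsto (fun n => Real.sqrt (∑' p, qf b (fun x => v x - ψ n x) p))
          atTop (𝓝 0) := by
        have := (Real.continuous_sqrt.tendsto 0).comp hqut
        simpa [Function.comp_def] using this
      have := h1.mul_const (Real.sqrt (∑' p, qf b v p))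
      simpa using this
    have habs : Tendsto (fun n => |∑' p : X × X,
        b p.1 p.2 * (v p.1 - ψ n p.1 - (v p.2 - ψ n p.2)) * (v p.1 - v p.2)|) atTop (𝓝 0) :=
      squeeze_zero (fun n => abs_nonneg _) (fun n => (hW n).2) hbndt
    exact (tendsto_zero_iff_abs_tendsto_zero _).2 habs
  -- Green's formula at ψ n and the limit of ∑ ψ L
  have hgreen : ∀ n, ∑' x, ψ n x * ((∑' y, b x y * (v x - v y)) + c x * v x)
      = (1/2) * ((∑' p, qf b v p) - ∑' p : X × X,
          b p.1 p.2 * (v p.1 - ψ n p.1 - (v p.2 - ψ n p.2)) * (v p.1 - v p.2))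
        + ∑' x, c x * ψ n x * v x := by
    intro n
    have h := (green_cc hg hv hqv (hψfin n)).2
    rw [h]
    congr 1
    congr 1
    have hmid : ∑' p : X × X, b p.1 p.2 * (ψ n p.1 - ψ n p.2) * (v p.1 - v p.2)
        = (∑' p, qf b v p) - ∑' p : X × X,
            b p.1 p.2 * (v p.1 - ψ n p.1 - (v p.2 - ψ n p.2)) * (v p.1 - v p.2) := by
      rw [← Summable.tsum_sub hqv (hW n).1]
      refine tsum_congr fun p => ?_
      simp only [qf]
      ring
    exact hmid
  have hCt : Tendsto (fun n => ∑' x, c x * ψ n x * v x) atTop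
      (𝓝 (∑' x, c x * v x ^ 2)) := by
    have h := tendsto_tsum_of_dominated_convergence (𝓕 := atTop)
      (f := fun n x => c x * ψ n x * v x) (g := fun x => c x * v x * v x)
      (bound := fun x => c x * v x ^ 2) hcv ?_ ?_
    · have e : ∑' x, c x * v x * v x = ∑' x, c x * v x ^ 2 :=
        tsum_congr fun x => by ring
      rwa [e] at h
    · intro x
      exact ((hψx x).const_mul (c x)).mul_const (v x)
    · refine Eventually.of_forall fun n x => ?_
      have h1 : 0 ≤ c x * ψ n x * v x :=
        mul_nonneg (mul_nonneg (hg.c_nonneg x) (hψ_nonneg n x)) (hvpos x).le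
      rw [Real.norm_eq_abs, abs_of_nonneg h1]
      calc c x * ψ n x * v x ≤ c x * v x * v x := by
            refine mul_le_mul_of_nonneg_right ?_ (hvpos x).le
            exact mul_le_mul_of_nonneg_left (hψ_le n x) (hg.c_nonneg x)
        _ = c x * v x ^ 2 := by ring
  have hTt : Tendsto (fun n => ∑' x, ψ n x * ((∑' y, b x y * (v x - v y)) + c x * v x))
      atTop (𝓝 ((1/2) * (∑' p, qf b v p) + ∑' x, c x * v x ^ 2)) := by
    have h1 : Tendsto (fun n => (1/2 : ℝ) * ((∑' p, qf b v p) - ∑' p : X × X,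
        b p.1 p.2 * (v p.1 - ψ n p.1 - (v p.2 - ψ n p.2)) * (v p.1 - v p.2))
        + ∑' x, c x * ψ n x * v x) atTop
        (𝓝 ((1/2) * (∑' p, qf b v p) + ∑' x, c x * v x ^ 2)) := by
      have h2 : Tendsto (fun n => (∑' p, qf b v p) - ∑' p : X × X,
          b p.1 p.2 * (v p.1 - ψ n p.1 - (v p.2 - ψ n p.2)) * (v p.1 - v p.2)) atTop
          (𝓝 (∑' p, qf b v p)) := by
        have := (tendsto_const_nhds (x := ∑' p, qf b v p) (f := atTop)).sub hWt
        simpa using this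
      exact (h2.const_mul _).add hCt
    exact h1.congr fun n => (hgreen n).symm
  -- nonnegativity of L
  have hLnn : ∀ x, 0 ≤ (∑' y, b x y * (v x - v y)) + c x * v x := by
    intro x
    have h := mul_nonneg (hg.m_pos x).le (hsup.2 x)
    have hm := (hg.m_pos x).ne'
    rw [lap] at h
    have e : m x * (1 / m x * ∑' y, b x y * (v x - v y) + c x / m x * v x)
        = (∑' y, b x y * (v x - v y)) + c x * v x := by
      field_simp
    rwa [e] at h
  -- summability of ψ n * L
  have hψLsum : ∀ n, Summable fun x => ψ n x * ((∑' y, b x y * (v x - v y)) + c x * v x) := by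
    intro n
    refine summable_of_ne_finset_zero (s := (hψfin n).toFinset) fun x hx => ?_
    rw [finsupp_zero_off (hψfin n) x hx, zero_mul]
  -- summability of v * L
  have hvLsum : Summable fun x => v x * ((∑' y, b x y * (v x - v y)) + c x * v x) := by
    refine summable_of_sum_le (c := (1/2) * (∑' p, qf b v p) + ∑' x, c x * v x ^ 2)
      (fun x => mul_nonneg (hvpos x).le (hLnn x)) (fun s => ?_)
    have h1 : Tendsto (fun n => ∑ x ∈ s, ψ n x * ((∑' y, b x y * (v x - v y)) + c x * v x))
        atTop (𝓝 (∑ x ∈ s, v x * ((∑' y, b x y * (v x - v y)) + c x * v x))) :=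
      tendsto_finset_sum s fun x _ => (hψx x).mul_const _
    refine le_of_tendsto_of_tendsto' h1 hTt fun n => ?_
    exact Summable.sum_le_tsum s (fun x _ => mul_nonneg (hψ_nonneg n x) (hLnn x)) (hψLsum n)
  -- the key identity
  have hKey : ∑' x, v x * ((∑' y, b x y * (v x - v y)) + c x * v x)
      = (1/2) * (∑' p, qf b v p) + ∑' x, c x * v x ^ 2 := by
    have hT2 : Tendsto (fun n => ∑' x, ψ n x * ((∑' y, b x y * (v x - v y)) + c x * v x))
        atTop (𝓝 (∑' x, v x * ((∑' y, b x y * (v x - v y)) + c x * v x))) := by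
      refine tendsto_tsum_of_dominated_convergence (𝓕 := atTop) hvLsum
        (fun x => (hψx x).mul_const _) (Eventually.of_forall fun n x => ?_)
      have h1 : 0 ≤ ψ n x * ((∑' y, b x y * (v x - v y)) + c x * v x) :=
        mul_nonneg (hψ_nonneg n x) (hLnn x)
      rw [Real.norm_eq_abs, abs_of_nonneg h1]
      exact mul_le_mul_of_nonneg_right (hψ_le n x) (hLnn x)
    exact tendsto_nhds_unique hT2 hTt
  -- slicewise facts for v²
  have hslice : ∀ x, Summable fun y => b x y * (v x - v y) ^ 2 := by
    intro x
    have hinj : Function.Injective fun y : X => ((x, y) : X × X) := by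
      intro y1 y2 h
      exact congrArg Prod.snd h
    exact (hqv.comp_injective hinj).congr fun y => rfl
  have hbv : ∀ x, Summable fun y => b x y * (v x - v y) := fun x => summable_bdiff hg hv x
  have hdsum : Summable fun x => ∑' y, b x y * (v x - v y) ^ 2 := by
    have h := ((summable_prod_of_nonneg fun p => qf_nonneg hbnn v p).1 hqv).2
    exact h.congr fun x => rfl
  -- pointwise identity for 𝓛 v²
  have hlap2 : ∀ x, m x * lap b c m (fun y => v y ^ 2) x
      = 2 * (v x * ((∑' y, b x y * (v x - v y)) + c x * v x))
        - (∑' y, b x y * (v x - v y) ^ 2) - c x * v x ^ 2 := by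
    intro x
    have hm := (hg.m_pos x).ne'
    have hssum : ∑' y, b x y * (v x ^ 2 - v y ^ 2)
        = 2 * v x * (∑' y, b x y * (v x - v y)) - ∑' y, b x y * (v x - v y) ^ 2 := by
      rw [← tsum_mul_left, ← Summable.tsum_sub ((hbv x).mul_left (2 * v x)) (hslice x)]
      exact tsum_congr fun y => by ring
    rw [lap]
    have e : m x * (1 / m x * ∑' y, b x y * (v x ^ 2 - v y ^ 2) + c x / m x * v x ^ 2)
        = (∑' y, b x y * (v x ^ 2 - v y ^ 2)) + c x * v x ^ 2 := by
      field_simp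
    rw [e, hssum]
    ring
  -- summability of m ⬝ 𝓛 v²
  have hmain : Summable fun x => m x * lap b c m (fun y => v y ^ 2) x := by
    have h := ((hvLsum.mul_left 2).sub hdsum).sub hcv
    exact h.congr fun x => (hlap2 x).symm
  constructor
  · have h := hmain.abs
    refine h.congr fun x => ?_
    rw [abs_mul, abs_of_pos (hg.m_pos x)]
  · have e1 : ∑' x, m x * lap b c m (fun y => v y ^ 2) x
        = 2 * (∑' x, v x * ((∑' y, b x y * (v x - v y)) + c x * v x))
          - (∑' x, ∑' y, b x y * (v x - v y) ^ 2) - ∑' x, c x * v x ^ 2 := by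
      rw [tsum_congr hlap2, Summable.tsum_sub (((hvLsum.mul_left 2)).sub hdsum) hcv,
        Summable.tsum_sub (hvLsum.mul_left 2) hdsum, tsum_mul_left]
    have e2 : ∑' x, ∑' y, b x y * (v x - v y) ^ 2 = ∑' p, qf b v p := by
      rw [Summable.tsum_prod' hqv fun x => (hslice x).congr fun y => rfl]
      rfl
    rw [e1, e2, hKey]
    ring


end HG
end
end

section
/- Let X be a set, |·| : X → [0,∞) a function, and let p : (0,∞) × X → [0,∞), (t,x) ↦ p_t(x), be such that t ↦ p_t(x) is measurable for each x. Assume the Davies–Gaffney type short time bound: there are C₀ > 0 and κ ∈ [0, ξ(1)) such that p_t(x) ≤ C₀·e^{κ|x|}·exp(−t·ξ(|x|/t)) for all t > 0 and x ∈ X, where ξ(r) = r·arsinh(r) + 1 − √(1+r²). Then for every bounded interval I ⊆ (0,∞) there are constants c, C > 0 such that for every α ∈ I and every x ∈ X with |x| > 0, ∫₀^{|x|} p_t(x)·t^{α−1} dt ≤ (C/α)·e^{−c|x|}. -/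
/-!
Since `ξ' = arsinh`, `ξ` is convex with `ξ(0) = 0`, so `ξ(r) ≥ r ξ(1)` for `r ≥ 1`. Hence for
`0 < t < |x|` we get `t ξ(|x|/t) ≥ ξ(1)|x|`, and the Davies–Gaffney bound gives
`p_t(x) ≤ C₀ e^{-2c|x|}` with `2c = ξ(1) - κ > 0`. Integrating `t^{α-1}` over `(0, |x|)` yields
`|x|^α / α`, and one factor `e^{-c|x|}` absorbs `|x|^α` uniformly in `α ≤ ⌈B⌉`.
-/

open Filter MeasureTheory Topology
open scoped ENNReal NNReal

noncomputable section

namespace HG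

variable {X : Type*}

open scoped Classical

/-- The function `ξ(r) = r·arsinh(r) + 1 − √(1+r²)`. -/
def xi (r : ℝ) : ℝ := r * Real.arsinh r + 1 - Real.sqrt (1 + r ^ 2)


open Real Set
open scoped Nat

lemma hasDerivAt_xi (r : ℝ) : HasDerivAt xi (arsinh r) r := by
  have hpos : (0 : ℝ) < 1 + r ^ 2 := by positivity
  have hsqrt : HasDerivAt (fun r : ℝ => √(1 + r ^ 2)) (r / √(1 + r ^ 2)) r := by
    convert ((hasDerivAt_pow 2 r).const_add 1).sqrt hpos.ne' using 1
    field_simp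
    ring
  refine ((((hasDerivAt_id' r).mul (hasDerivAt_arsinh r)).add_const 1).sub hsqrt).congr_deriv ?_
  ring

lemma xi_zero : xi 0 = 0 := by simp [xi]

lemma convexOn_xi : ConvexOn ℝ univ xi :=
  Monotone.convexOn_univ_of_deriv (fun r => (hasDerivAt_xi r).differentiableAt) <| by
    simpa only [funext fun r => (hasDerivAt_xi r).deriv] using arsinh_strictMono.monotone

lemma mul_xi_one_le_xi {r : ℝ} (hr : 1 ≤ r) : r * xi 1 ≤ xi r := by
  have hr0 : 0 < r := one_pos.trans_le hr
  have h := convexOn_xi.2 (mem_univ r) (mem_univ 0) (inv_nonneg.2 hr0.le)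
    (sub_nonneg.2 (inv_le_one_of_one_le₀ hr)) (add_sub_cancel _ _)
  rw [smul_eq_mul, inv_mul_cancel₀ hr0.ne', smul_zero, add_zero, xi_zero, smul_zero, add_zero,
    smul_eq_mul] at h
  rwa [← le_inv_mul_iff₀ hr0]

lemma exp_neg_mul_xi_div_le {s t : ℝ} (ht : 0 < t) (hts : t ≤ s) :
    exp (-t * xi (s / t)) ≤ exp (-(xi 1 * s)) := by
  have h := mul_le_mul_of_nonneg_left (mul_xi_one_le_xi ((one_le_div ht).2 hts)) ht.le
  rw [← mul_assoc, mul_div_cancel₀ _ ht.ne'] at h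
  exact exp_le_exp.2 (by linarith)

lemma rpow_le_one_add_pow {s α : ℝ} {N : ℕ} (hs : 0 ≤ s) (hα : 0 ≤ α) (hαN : α ≤ N) :
    s ^ α ≤ 1 + s ^ N := by
  rcases le_total s 1 with h | h
  · linarith [rpow_le_one hs h hα, pow_nonneg hs N]
  · linarith [rpow_natCast s N ▸ rpow_le_rpow_of_exponent_le h hαN]

lemma pow_mul_exp_neg_le {s c : ℝ} (hs : 0 ≤ s) (hc : 0 < c) (N : ℕ) :
    s ^ N * exp (-c * s) ≤ N ! / c ^ N := by
  have h := pow_div_factorial_le_exp (x := c * s) (mul_nonneg hc.le hs) N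
  rw [div_le_iff₀ (by positivity), mul_pow] at h
  rw [le_div_iff₀ (by positivity), neg_mul, exp_neg]
  calc s ^ N * (exp (c * s))⁻¹ * c ^ N = c ^ N * s ^ N / exp (c * s) := by ring
    _ ≤ N ! := by rw [div_le_iff₀ (exp_pos _)]; linarith

lemma rpow_mul_exp_neg_le {s c α : ℝ} {N : ℕ} (hs : 0 ≤ s) (hc : 0 < c) (hα : 0 ≤ α)
    (hαN : α ≤ N) : s ^ α * exp (-c * s) ≤ 1 + N ! / c ^ N := by
  have hexp : exp (-c * s) ≤ 1 := exp_le_one_iff.2 (by nlinarith)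
  calc s ^ α * exp (-c * s) ≤ (1 + s ^ N) * exp (-c * s) :=
        mul_le_mul_of_nonneg_right (rpow_le_one_add_pow hs hα hαN) (exp_pos _).le
    _ = exp (-c * s) + s ^ N * exp (-c * s) := by ring
    _ ≤ 1 + N ! / c ^ N := add_le_add hexp (pow_mul_exp_neg_le hs hc N)

lemma setLIntegral_Ioo_ofReal_rpow {s α : ℝ} (hs : 0 ≤ s) (hα : 0 < α) :
    ∫⁻ t in Ioo 0 s, ENNReal.ofReal (t ^ (α - 1)) = ENNReal.ofReal (s ^ α / α) := by
  have hint : IntegrableOn (fun t : ℝ => t ^ (α - 1)) (Ioo 0 s) :=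
    (intervalIntegral.intervalIntegrable_rpow' (by linarith)).1.mono_set Ioo_subset_Ioc_self
  rw [← ofReal_integral_eq_lintegral_ofReal hint
    ((ae_restrict_mem measurableSet_Ioo).mono fun t ht => rpow_nonneg ht.1.le _),
    ← integral_Ioc_eq_integral_Ioo, ← intervalIntegral.integral_of_le hs,
    integral_rpow (Or.inl (by linarith)), sub_add_cancel, zero_rpow hα.ne', sub_zero]

lemma setLIntegral_Ioo_mul_rpow_le {f : ℝ → ℝ} {s α K : ℝ} (hs : 0 ≤ s) (hα : 0 < α)
    (hK : 0 ≤ K) (hf : ∀ t ∈ Ioo 0 s, f t ≤ K) :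
    ∫⁻ t in Ioo 0 s, ENNReal.ofReal (f t * t ^ (α - 1)) ≤ ENNReal.ofReal (K * (s ^ α / α)) :=
  calc ∫⁻ t in Ioo 0 s, ENNReal.ofReal (f t * t ^ (α - 1))
      ≤ ∫⁻ t in Ioo 0 s, ENNReal.ofReal K * ENNReal.ofReal (t ^ (α - 1)) :=
        setLIntegral_mono' measurableSet_Ioo fun t ht => by
          rw [← ENNReal.ofReal_mul hK]
          exact ENNReal.ofReal_le_ofReal
            (mul_le_mul_of_nonneg_right (hf t ht) (rpow_nonneg ht.1.le _))
    _ = ENNReal.ofReal (K * (s ^ α / α)) := by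
        rw [lintegral_const_mul' _ _ ENNReal.ofReal_ne_top, setLIntegral_Ioo_ofReal_rpow hs hα,
          ← ENNReal.ofReal_mul hK]

theorem stmt18_general {X : Type*} (n : X → ℝ)
    (p : ℝ → X → ℝ)
    (C₀ κ : ℝ) (hC₀ : 0 < C₀) (hκ1 : κ < xi 1)
    (hbound : ∀ t : ℝ, 0 < t → ∀ x,
      p t x ≤ C₀ * Real.exp (κ * n x) * Real.exp (-t * xi (n x / t))) :
    ∀ A B : ℝ, 0 < A →
      ∃ c C : ℝ, 0 < c ∧ 0 < C ∧ ∀ α ∈ Set.Icc A B, ∀ x, 0 < n x →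
        (∫⁻ t in Set.Ioo (0 : ℝ) (n x), ENNReal.ofReal (p t x * t ^ (α - 1))) ≤
          ENNReal.ofReal (C / α * Real.exp (-c * n x)) := by
  intro A B hA
  obtain ⟨c, hc, hcκ⟩ : ∃ c : ℝ, 0 < c ∧ κ = xi 1 - 2 * c :=
    ⟨(xi 1 - κ) / 2, by linarith, by ring⟩
  refine ⟨c, C₀ * (1 + ⌈B⌉₊ ! / c ^ ⌈B⌉₊), hc, by positivity, fun α hα x hx => ?_⟩
  have hα0 : 0 < α := hA.trans_le hα.1
  have hp : ∀ t ∈ Ioo 0 (n x), p t x ≤ C₀ * exp (-(2 * c) * n x) := fun t ht =>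
    calc p t x ≤ C₀ * exp (κ * n x) * exp (-(xi 1 * n x)) :=
          (hbound t ht.1 x).trans <|
            mul_le_mul_of_nonneg_left (exp_neg_mul_xi_div_le ht.1 ht.2.le) (by positivity)
      _ = C₀ * exp (-(2 * c) * n x) := by rw [mul_assoc, ← exp_add, hcκ]; ring_nf
  refine (setLIntegral_Ioo_mul_rpow_le hx.le hα0 (by positivity) hp).trans
    (ENNReal.ofReal_le_ofReal ?_)
  have hM := rpow_mul_exp_neg_le hx.le hc hα0.le (hα.2.trans (Nat.le_ceil B))
  calc C₀ * exp (-(2 * c) * n x) * (n x ^ α / α)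
      = C₀ / α * exp (-c * n x) * (n x ^ α * exp (-c * n x)) := by
        rw [show -(2 * c) * n x = -c * n x + -c * n x by ring, exp_add]; ring
    _ ≤ C₀ / α * exp (-c * n x) * (1 + ⌈B⌉₊ ! / c ^ ⌈B⌉₊) :=
        mul_le_mul_of_nonneg_left hM (by positivity)
    _ = C₀ * (1 + ⌈B⌉₊ ! / c ^ ⌈B⌉₊) / α * exp (-c * n x) := by ring

/-- Proposition 4.6, short time upper bounds. Assume the
Davies–Gaffney type bound `p_t(x) ≤ C₀ e^{κ|x|} exp(−t ξ(|x|/t))` with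
`0 ≤ κ < ξ(1)`. Then for every bounded interval `I ⊆ (0,∞)` there are
`c, C > 0` such that for all `α ∈ I` and `x` with `|x| > 0`,
`∫₀^{|x|} p_t(x) t^{α−1} dt ≤ (C/α) e^{−c|x|}`. -/
theorem stmt18 {X : Type*} (n : X → ℝ) (hn : ∀ x, 0 ≤ n x)
    (p : ℝ → X → ℝ) (hmeas : ∀ x, Measurable fun t => p t x)
    (hpos : ∀ t : ℝ, 0 < t → ∀ x, 0 ≤ p t x)
    (C₀ κ : ℝ) (hC₀ : 0 < C₀) (hκ0 : 0 ≤ κ) (hκ1 : κ < xi 1)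
    (hbound : ∀ t : ℝ, 0 < t → ∀ x,
      p t x ≤ C₀ * Real.exp (κ * n x) * Real.exp (-t * xi (n x / t))) :
    ∀ A B : ℝ, 0 < A →
      ∃ c C : ℝ, 0 < c ∧ 0 < C ∧ ∀ α ∈ Set.Icc A B, ∀ x, 0 < n x →
        (∫⁻ t in Set.Ioo (0 : ℝ) (n x), ENNReal.ofReal (p t x * t ^ (α - 1))) ≤
          ENNReal.ofReal (C / α * Real.exp (-c * n x)) :=
  stmt18_general n p C₀ κ hC₀ hκ1 hbound

end HG
end
end
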